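/- arXiv:2304.07246 — 4 statements merged into one kernel-verified Lean document; each statement's English description precedes it below -/
import Mathlib

section
/- Let C be a Cartan matrix of finite type with symmetrizer D = diag(d_i), and let B̃(t) denote the inverse of the symmetric matrix Ⲝ(t)D^{-1} (where Ⲝ(t) is the t-quantized Cartan matrix), with Laurent expansion B̃_{i,j}(t) = Σ_{u∈ℤ} b̃_{i,j}(u) t^u at t = 0. Then for any i, j ∈ I and u ∈ ℤ: (1) b̃_{i,j}(u) = 0 whenever u ≤ d(i,j) or u ≡ d(i,j) (mod 2), and (2) b̃_{i,j}(d(i,j)+1) = max(d_i, d_j), where d(i,j) is the graph distance between i and j in the Dynkin diagram. -/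
/-!
STATEMENT 0.  Let `C` be a Cartan matrix of finite type with symmetrizer `D = diag(d_i)`
(finite type is encoded by positive definiteness of the symmetrized matrix `DC`), and let
`B̃(t)` denote the inverse of the symmetric matrix `Ⲝ(t)D⁻¹`, where `Ⲝ(t)` is the
`t`-quantized Cartan matrix (off-diagonal entries `c_{i,j}`, diagonal entries `t + t⁻¹`).
We work inside the field of formal Laurent series `ℚ((t))`, so that the entries of the
inverse matrix are automatically given by their Laurent expansion at `t = 0`,
`B̃_{i,j}(t) = Σ_u b̃_{i,j}(u) tᵘ`.  Then for all `i j` and `u : ℤ`: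
(1) `b̃_{i,j}(u) = 0` whenever `u ≤ d(i,j)` or `u ≡ d(i,j) (mod 2)`, and
(2) `b̃_{i,j}(d(i,j)+1) = max(d_i, d_j)`,
where `d(i,j)` is the graph distance in the Dynkin diagram of `C`.
-/

noncomputable section

open scoped Classical

namespace Stmt0

/-- Formal Laurent series over `ℚ`; Laurent expansions at `t = 0` take place here. -/
abbrev K : Type := LaurentSeries ℚ

/-- The variable `t`, as a Laurent series. -/
def tv : K := HahnSeries.single 1 1

variable {I : Type*} [Fintype I] [DecidableEq I]

/-- The `t`-quantized Cartan matrix `Ⲝ(t) = C(1,t)`: diagonal entries `t + t⁻¹`,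
off-diagonal entries `c_{i,j}`. -/
def uC (C : I → I → ℤ) : Matrix I I K :=
  Matrix.of fun i j => if i = j then tv + tv⁻¹ else (C i j : K)

/-- The symmetrized matrix `ⲜB(t) = Ⲝ(t) D⁻¹`. -/
def uB (C : I → I → ℤ) (d : I → ℤ) : Matrix I I K :=
  uC C * Matrix.diagonal fun i => ((d i : K))⁻¹

/-- Its inverse `B̃(t) = (Ⲝ(t)D⁻¹)⁻¹`. -/
def tB (C : I → I → ℤ) (d : I → ℤ) : Matrix I I K := (uB C d)⁻¹

/-- The Laurent coefficients `b̃_{i,j}(u)` of `B̃_{i,j}(t)` at `t = 0`. -/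
def btil (C : I → I → ℤ) (d : I → ℤ) (i j : I) (u : ℤ) : ℚ := ((tB C d) i j).coeff u

/-- The Dynkin diagram of `C`: vertices `i ≠ j` are adjacent when `c_{i,j} ≠ 0`. -/
def dynkinGraph (C : I → I → ℤ) : SimpleGraph I :=
  SimpleGraph.fromRel fun i j => C i j ≠ 0

/-- Bundle of the Cartan-matrix hypotheses. -/
structure Hyp (C : I → I → ℤ) (d : I → ℤ) : Prop where
  hdiag : ∀ i, C i i = 2
  hoff : ∀ i j, i ≠ j → C i j ≤ 0
  hd : ∀ i, 0 < d i
  hsym : ∀ i j, d i * C i j = d j * C j i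
  hconn : (dynkinGraph C).Connected
  hposdef : ∀ v : I → ℚ, v ≠ 0 → 0 < ∑ i, ∑ j, v i * ((d i * C i j : ℤ) : ℚ) * v j

/-- The symmetrized matrix entries, as rationals. -/
def Mq (C : I → I → ℤ) (d : I → ℤ) (i j : I) : ℚ := ((d i * C i j : ℤ) : ℚ)

/-- Absolute value of the off-diagonal part of `C`, as a rational matrix. -/
def Aabs (C : I → I → ℤ) : Matrix I I ℚ :=
  Matrix.of fun i j => if i = j then 0 else ((-(C i j) : ℤ) : ℚ)

/-- The fundamental recursive sequence of matrices. -/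
def Hm (C : I → I → ℤ) : ℕ → Matrix I I ℚ
  | 0 => 0
  | 1 => 1
  | (n+2) => Aabs C * Hm C (n+1) - Hm C n

section Basic
variable {C : I → I → ℤ} {d : I → ℤ}

lemma czero_iff (h : Hyp C d) (a b : I) : C a b = 0 ↔ C b a = 0 := by
  have := h.hsym a b
  have ha := h.hd a
  have hb := h.hd b
  constructor <;> intro h0 <;> nlinarith [this]

lemma adj_iff (h : Hyp C d) {a b : I} :
    (dynkinGraph C).Adj a b ↔ a ≠ b ∧ C a b ≠ 0 := by
  rw [dynkinGraph, SimpleGraph.fromRel_adj]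
  constructor
  · rintro ⟨hne, hc | hc⟩
    · exact ⟨hne, hc⟩
    · exact ⟨hne, fun h0 => hc ((czero_iff h a b).mp h0)⟩
  · rintro ⟨hne, hc⟩
    exact ⟨hne, Or.inl hc⟩

lemma Mq_diag (h : Hyp C d) (a : I) : Mq C d a a = 2 * (d a : ℚ) := by
  unfold Mq
  rw [h.hdiag]
  push_cast
  ring

/-- helper: sums for functions supported on an indexed family -/
lemma ind_sum (a : ℕ → I) (x : ℕ → ℚ) (n : ℕ) (g : I → ℚ) :
    ∑ i, (∑ s ∈ Finset.range (n+1), if i = a s then x s else 0) * g i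
      = ∑ s ∈ Finset.range (n+1), x s * g (a s) := by
  simp only [Finset.sum_mul]
  rw [Finset.sum_comm]
  refine Finset.sum_congr rfl fun s _ => ?_
  simp only [ite_mul, zero_mul]
  rw [Finset.sum_ite_eq' Finset.univ (a s) (fun i => x s * g i)]
  simp

lemma Qexpand (C : I → I → ℤ) (d : I → ℤ) (a : ℕ → I) (x : ℕ → ℚ) (n : ℕ) :
    (∑ i, ∑ j, (∑ s ∈ Finset.range (n+1), if i = a s then x s else 0) * Mq C d i j *
      (∑ t ∈ Finset.range (n+1), if j = a t then x t else 0))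
    = ∑ s ∈ Finset.range (n+1), ∑ t ∈ Finset.range (n+1),
        x s * x t * Mq C d (a s) (a t) := by
  have step1 : ∀ i : I,
      (∑ j, (∑ s ∈ Finset.range (n+1), if i = a s then x s else 0) * Mq C d i j *
        (∑ t ∈ Finset.range (n+1), if j = a t then x t else 0))
      = ∑ t ∈ Finset.range (n+1), x t *
          ((∑ s ∈ Finset.range (n+1), if i = a s then x s else 0) * Mq C d i (a t)) := by
    intro i
    rw [← ind_sum a x n (fun y => (∑ s ∈ Finset.range (n+1), if i = a s then x s else 0) * Mq C d i y)]
    refine Finset.sum_congr rfl fun j _ => ?_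
    ring
  calc (∑ i, ∑ j, (∑ s ∈ Finset.range (n+1), if i = a s then x s else 0) * Mq C d i j *
      (∑ t ∈ Finset.range (n+1), if j = a t then x t else 0))
      = ∑ i, ∑ t ∈ Finset.range (n+1), x t *
          ((∑ s ∈ Finset.range (n+1), if i = a s then x s else 0) * Mq C d i (a t)) := by
        exact Finset.sum_congr rfl fun i _ => step1 i
    _ = ∑ t ∈ Finset.range (n+1), ∑ i, x t *
          ((∑ s ∈ Finset.range (n+1), if i = a s then x s else 0) * Mq C d i (a t)) :=
        Finset.sum_comm
    _ = ∑ t ∈ Finset.range (n+1), x t *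
          (∑ i, (∑ s ∈ Finset.range (n+1), if i = a s then x s else 0) * Mq C d i (a t)) := by
        refine Finset.sum_congr rfl fun t _ => ?_
        rw [Finset.mul_sum]
    _ = ∑ t ∈ Finset.range (n+1), x t *
          (∑ s ∈ Finset.range (n+1), x s * Mq C d (a s) (a t)) := by
        refine Finset.sum_congr rfl fun t _ => ?_
        rw [ind_sum a x n (fun y => Mq C d y (a t))]
    _ = ∑ s ∈ Finset.range (n+1), ∑ t ∈ Finset.range (n+1),
        x s * x t * Mq C d (a s) (a t) := by
        rw [Finset.sum_comm]
        refine Finset.sum_congr rfl fun t _ => ?_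
        rw [Finset.mul_sum]
        refine Finset.sum_congr rfl fun s _ => ?_
        ring

lemma indicator_ne_zero (a : ℕ → I) (x : ℕ → ℚ) (n : ℕ)
    (hinj : ∀ s ≤ n, ∀ t ≤ n, a s = a t → s = t) (s₀ : ℕ) (hs₀ : s₀ ≤ n)
    (hx : x s₀ ≠ 0) :
    (fun y => ∑ s ∈ Finset.range (n+1), if y = a s then x s else 0) ≠ 0 := by
  intro hv
  have := congrFun hv (a s₀)
  simp only [Pi.zero_apply] at this
  rw [Finset.sum_eq_single s₀] at this
  · simp at this; exact hx this
  · intro s hs hne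
    rw [if_neg]
    intro heq
    exact hne (hinj s (by simpa [Nat.lt_succ_iff] using hs) s₀ hs₀ heq.symm)
  · intro habs
    exact absurd (Finset.mem_range.mpr (Nat.lt_succ_of_le hs₀)) habs

/-- two-point quadratic form positivity -/
lemma qf_two (h : Hyp C d) (a b : I) (hab : a ≠ b) (x y : ℚ) (hx : x ≠ 0) :
    0 < x * Mq C d a a * x + x * Mq C d a b * y + y * Mq C d b a * x + y * Mq C d b b * y := by
  set aa : ℕ → I := fun s => if s = 0 then a else b with haa
  set xx : ℕ → ℚ := fun s => if s = 0 then x else y with hxx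
  have hv := h.hposdef (fun z => ∑ s ∈ Finset.range 2, if z = aa s then xx s else 0) ?_
  · have hq := Qexpand C d aa xx 1
    unfold Mq at hq
    rw [show (1:ℕ)+1 = 2 from rfl] at hq
    rw [hq] at hv
    simp only [Finset.sum_range_succ, Finset.sum_range_zero] at hv
    simp only [haa, hxx] at hv
    norm_num at hv
    unfold Mq
    push_cast
    push_cast at hv
    convert hv using 1
    ring
  · refine indicator_ne_zero aa xx 1 ?_ 0 (by norm_num) (by simpa [hxx] using hx)
    intro s hs t ht heq
    interval_cases s <;> interval_cases t <;> simp_all [haa]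

lemma edge_eq (h : Hyp C d) {a b : I} (hab : (dynkinGraph C).Adj a b) :
    d a * C a b = -(max (d a) (d b)) := by
  obtain ⟨hne, hC⟩ := (adj_iff h).mp hab
  have hCba : C b a ≠ 0 := fun h0 => hC ((czero_iff h b a).mp h0)
  have hP : 1 ≤ -(C a b) := by have := h.hoff a b hne; omega
  have hQ : 1 ≤ -(C b a) := by have := h.hoff b a hne.symm; omega
  have hda := h.hd a
  have hdb := h.hd b
  have hkey : d a * (-(C a b)) = d b * (-(C b a)) := by
    linear_combination -(h.hsym a b)
  have hkeyq : (d a : ℚ) * (C a b : ℚ) = (d b : ℚ) * (C b a : ℚ) := by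
    exact_mod_cast h.hsym a b
  -- positivity inequality
  have hq := qf_two h a b hne (2 * (d b : ℚ)) ((d a : ℚ) * ((-(C a b) : ℤ) : ℚ))
    (by have : (0:ℚ) < (d b : ℚ) := by exact_mod_cast hdb
        positivity)
  rw [Mq_diag h, Mq_diag h] at hq
  unfold Mq at hq
  push_cast at hq
  have e3 : 2*(d b:ℚ)*((d a:ℚ)*(C a b:ℚ))^2
      = 2*(d b:ℚ)*((d a:ℚ)*(C a b:ℚ))*((d b:ℚ)*(C b a:ℚ)) := by
    rw [← hkeyq]; ring
  have hq2 : (0:ℚ) < 8*(d a:ℚ)*(d b:ℚ)^2 - 2*(d b:ℚ)*((d a:ℚ)*(C a b:ℚ))^2 := by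
    nlinarith [hq, e3]
  have hint : (0:ℤ) < 8 * d a * (d b)^2 - 2 * (d b) * ((d a) * (C a b))^2 := by
    exact_mod_cast hq2
  have h5 : 2 * d b * ((d a)^2 * (C a b)^2) < 2 * d b * (4 * d a * d b) := by nlinarith [hint]
  have h6 : (d a)^2 * (C a b)^2 < 4 * d a * d b :=
    lt_of_mul_lt_mul_left h5 (by positivity)
  have h4 : d a * (d a * (C a b)^2) < d a * (4 * d b) := by nlinarith [h6]
  have h4' : d a * (C a b)^2 < 4 * d b := lt_of_mul_lt_mul_left h4 hda.le
  have hdaP : 0 < d a * (-(C a b)) := by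
    apply mul_pos hda; omega
  have h7 : (-(C b a)) * (d a * (C a b)^2) < (-(C b a)) * (4 * d b) :=
    mul_lt_mul_of_pos_left h4' (by omega)
  have e : (d a * -(C a b)) * ((-(C a b)) * (-(C b a))) = (-(C b a)) * (d a * (C a b)^2) := by
    ring
  have e2 : (d a * -(C a b)) * 4 = (-(C b a)) * (4 * d b) := by
    linear_combination 4 * hkey
  have h9 : (d a * -(C a b)) * ((-(C a b)) * (-(C b a))) < (d a * -(C a b)) * 4 := by
    rw [e, e2]; exact h7
  have hPQ : (-(C a b)) * (-(C b a)) < 4 := lt_of_mul_lt_mul_left h9 hdaP.le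
  rcases eq_or_lt_of_le hP with hP1 | hP2
  · -- -C a b = 1
    have hCab : C a b = -1 := by omega
    have hdaeq : d a = d b * (-(C b a)) := by
      rw [← hP1] at hkey; linarith
    have hge : d b ≤ d a := by nlinarith [hdaeq, hQ, hdb]
    rw [max_eq_left hge, hCab]; ring
  · -- -C a b ≥ 2, so -C b a = 1
    have hQlt : -(C b a) < 2 := by nlinarith [hP2, hQ, hPQ]
    have hQ1 : -(C b a) = 1 := by omega
    have hdbeq : d b = d a * (-(C a b)) := by
      have h10 : d b * -(C b a) = d b * 1 := by rw [hQ1]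
      linarith [hkey, h10]
    have hge : d a ≤ d b := by nlinarith [hdbeq, hP2, hda]
    rw [max_eq_right hge]
    linarith [hdbeq]

lemma edge_dvd (h : Hyp C d) {a b : I} (hab : (dynkinGraph C).Adj a b) :
    d a ∣ max (d a) (d b) := by
  have he := edge_eq h hab
  exact ⟨-(C a b), by linear_combination he⟩

lemma edge_two_mul (h : Hyp C d) {a b : I} (hab : (dynkinGraph C).Adj a b)
    (hlt : d b < d a) : 2 * d b ≤ d a := by
  have hdvd := edge_dvd h hab.symm
  rw [max_comm, max_eq_left hlt.le] at hdvd
  obtain ⟨c, hc⟩ := hdvd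
  have hda := h.hd a
  have hdb := h.hd b
  have hc2 : 2 ≤ c := by nlinarith
  nlinarith

end Basic

lemma sum2 (f : ℕ → ℕ → ℚ) (n : ℕ)
    (hf : ∀ s t, s + 2 ≤ t → t ≤ n → f s t = 0 ∧ f t s = 0) :
    ∑ s ∈ Finset.range (n+1), ∑ t ∈ Finset.range (n+1), f s t
      = ∑ s ∈ Finset.range (n+1), f s s
        + ∑ s ∈ Finset.range n, (f s (s+1) + f (s+1) s) := by
  induction n with
  | zero => simp
  | succ n ih =>
    have hf' : ∀ s t, s + 2 ≤ t → t ≤ n → f s t = 0 ∧ f t s = 0 :=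
      fun s t h1 h2 => hf s t h1 (h2.trans (Nat.le_succ n))
    have hrow : ∑ t ∈ Finset.range (n+1), f (n+1) t = f (n+1) n := by
      rcases n with _ | m
      · simp
      · rw [Finset.sum_eq_single (m+1)]
        · intro t ht hne
          have ht' : t ≤ m := by
            have := Finset.mem_range.mp ht; omega
          exact (hf t (m+2) (by omega) (by omega)).2
        · intro habs
          exact absurd (Finset.mem_range.mpr (by omega)) habs
    have hcol : ∑ s ∈ Finset.range (n+1), f s (n+1) = f n (n+1) := by
      rcases n with _ | m
      · simp
      · rw [Finset.sum_eq_single (m+1)]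
        · intro t ht hne
          have ht' : t ≤ m := by
            have := Finset.mem_range.mp ht; omega
          exact (hf t (m+2) (by omega) (by omega)).1
        · intro habs
          exact absurd (Finset.mem_range.mpr (by omega)) habs
    rw [Finset.sum_range_succ (f := fun s => ∑ t ∈ Finset.range (n+1+1), f s t)]
    have inner : ∀ s, ∑ t ∈ Finset.range (n+1+1), f s t
        = ∑ t ∈ Finset.range (n+1), f s t + f s (n+1) :=
      fun s => Finset.sum_range_succ _ _
    rw [Finset.sum_congr rfl (fun s _ => inner s), Finset.sum_add_distrib,
      ih hf', hcol, Finset.sum_range_succ (f := fun t => f (n+1) t), hrow,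
      Finset.sum_range_succ (f := fun s => f s s),
      Finset.sum_range_succ (f := fun s => f s (s+1) + f (s+1) s)]
    rw [Finset.sum_range_succ (fun s => f s s) (n+1), Finset.sum_range_succ (fun s => f s s) n]
    ring

section Walks
variable {V : Type*} {G : SimpleGraph V}

lemma getD_support_zero {u v : V} (w : G.Walk u v) (x : V) :
    w.support.getD 0 x = u := by
  rw [w.support_eq_cons]; rfl

lemma getD_support_length {u v : V} (w : G.Walk u v) (x : V) :
    w.support.getD w.length x = v := by
  induction w with
  | nil => rfl
  | cons h p ih =>
    rw [SimpleGraph.Walk.support_cons, SimpleGraph.Walk.length_cons]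
    simpa using ih

lemma getD_support_adj {u v : V} (w : G.Walk u v) (x : V) {s : ℕ} (hs : s < w.length) :
    G.Adj (w.support.getD s x) (w.support.getD (s+1) x) := by
  induction w generalizing s with
  | nil => simp at hs
  | @cons a b c h p ih =>
    rcases s with _ | s
    · rw [SimpleGraph.Walk.support_cons]
      simp only [List.getD_cons_zero, List.getD_cons_succ]
      rw [p.support_eq_cons]
      simpa using h
    · rw [SimpleGraph.Walk.support_cons]
      simp only [List.getD_cons_succ]
      exact ih (by simpa using Nat.succ_lt_succ_iff.mp (by simpa using hs))

lemma walk_split {u v : V} (w : G.Walk u v) (x : V) (s : ℕ) (hs : s ≤ w.length) :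
    ∃ (w1 : G.Walk u (w.support.getD s x)) (w2 : G.Walk (w.support.getD s x) v),
      w1.length = s ∧ w2.length = w.length - s := by
  induction w generalizing s with
  | nil =>
    have hs0 : s = 0 := by simpa using hs
    subst hs0
    exact ⟨SimpleGraph.Walk.nil, SimpleGraph.Walk.nil, rfl, rfl⟩
  | @cons a b c h p ih =>
    rcases s with _ | s
    · rw [SimpleGraph.Walk.support_cons]
      exact ⟨SimpleGraph.Walk.nil, SimpleGraph.Walk.cons h p, rfl, rfl⟩
    · rw [SimpleGraph.Walk.support_cons]
      rw [List.getD_cons_succ]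
      obtain ⟨w1, w2, h1, h2⟩ := ih (s := s) (by simpa using Nat.succ_le_succ_iff.mp (by simpa using hs))
      exact ⟨SimpleGraph.Walk.cons h w1, w2, by simp [h1], by simp [h2]⟩

lemma getD_support_inj {u v : V} (w : G.Walk u v) (hw : w.IsPath) (x : V)
    {s t : ℕ} (hs : s ≤ w.length) (ht : t ≤ w.length)
    (heq : w.support.getD s x = w.support.getD t x) : s = t := by
  have hnd := hw.support_nodup
  have hlen := w.length_support
  have hs' : s < w.support.length := by omega
  have ht' : t < w.support.length := by omega
  rw [List.getD_eq_getElem _ _ hs', List.getD_eq_getElem _ _ ht'] at heq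
  exact (hnd.getElem_inj_iff).mp heq

end Walks
section Acyclic
variable {C : I → I → ℤ} {d : I → ℤ}

lemma Mq_offdiag_nonpos (h : Hyp C d) {a b : I} (hne : a ≠ b) : Mq C d a b ≤ 0 := by
  unfold Mq
  have h1 := h.hoff a b hne
  have h2 := (h.hd a).le
  have h3 : d a * C a b ≤ 0 := mul_nonpos_of_nonneg_of_nonpos h2 h1
  exact_mod_cast h3

lemma Mq_adj (h : Hyp C d) {a b : I} (hab : (dynkinGraph C).Adj a b) :
    Mq C d a b = -((max (d a) (d b) : ℤ) : ℚ) := by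
  unfold Mq
  rw [edge_eq h hab]
  push_cast
  ring

lemma acyclic (h : Hyp C d) : (dynkinGraph C).IsAcyclic := by
  intro v c hc
  have hTnd : c.support.tail.Nodup := hc.support_nodup
  set T : List I := c.support.tail with hT
  set S : Finset I := T.toFinset with hS
  have hsupp : c.support = v :: T := c.support_eq_cons
  have hlen3 := hc.three_le_length
  have hlensupp := c.length_support
  have hTlen : T.length = c.length := by
    rw [hsupp] at hlensupp
    simpa using hlensupp
  have hTne : T ≠ [] := by
    intro h0
    rw [h0] at hTlen
    simp at hTlen
    omega
  have h1 : c.support.getLast? = some v := by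
    rw [List.getLast?_eq_getLast c.support_ne_nil]
    exact congrArg some c.getLast_support
  have h2 : (v :: T).getLast? = some v := by rw [← hsupp]; exact h1
  have h3 : T.getLast? = some v := by
    obtain ⟨t0, T', hTT⟩ : ∃ t0 T', T = t0 :: T' := by
      rcases hTc : T with _ | ⟨t0, T'⟩
      · exact absurd hTc hTne
      · exact ⟨t0, T', rfl⟩
    rw [hTT] at h2 ⊢
    rwa [List.getLast?_cons_cons] at h2
  have hlast : T.getLast hTne = v := by
    have := List.getLast?_eq_getLast hTne
    rw [this] at h3
    exact Option.some.inj h3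
  have hTeq : T.dropLast ++ [v] = T := by
    rw [← hlast]; exact List.dropLast_concat_getLast hTne
  have hdropLast_perm : c.support.dropLast.Perm T := by
    have h1 : (v :: T).dropLast = v :: T.dropLast := by
      conv_lhs => rw [← hTeq]
      rw [show v :: (T.dropLast ++ [v]) = (v :: T.dropLast) ++ [v] by simp,
        List.dropLast_concat]
    rw [hsupp, h1]
    conv_rhs => rw [← hTeq]
    exact (List.perm_append_singleton v T.dropLast).symm
  have hmemT : ∀ x ∈ c.support, x ∈ T := by
    intro x hx
    rw [hsupp] at hx
    rcases List.mem_cons.mp hx with rfl | hx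
    · rw [← hlast]; exact List.getLast_mem hTne
    · exact hx
  set vq : I → ℚ := fun z => if z ∈ S then 1 else 0 with hvq
  have hvne : vq ≠ 0 := by
    intro h0
    have hmem : v ∈ S := by
      rw [hS]; exact List.mem_toFinset.mpr (hmemT v c.start_mem_support)
    have := congrFun h0 v
    simp [hvq, hmem] at this
  have hpos := h.hposdef vq hvne
  have hQ1 : (∑ i, ∑ j, vq i * ((d i * C i j : ℤ):ℚ) * vq j)
      = ∑ i ∈ S, ∑ j ∈ S, Mq C d i j := by
    rw [← Finset.sum_subset (Finset.subset_univ S)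
      (fun i _ hi => by simp [hvq, hi])]
    refine Finset.sum_congr rfl fun i hi => ?_
    rw [← Finset.sum_subset (Finset.subset_univ S)
      (fun j _ hj => by simp [hvq, hj])]
    refine Finset.sum_congr rfl fun j hj => ?_
    simp [hvq, hi, hj, Mq]
  have hQ2 : ∑ i ∈ S, ∑ j ∈ S, Mq C d i j
      = ∑ i ∈ S, Mq C d i i + ∑ p ∈ S.offDiag, Mq C d p.1 p.2 := by
    rw [← Finset.sum_product S S (fun p => Mq C d p.1 p.2),
      ← Finset.diag_union_offDiag S,
      Finset.sum_union (Finset.disjoint_diag_offDiag S), Finset.sum_diag]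
  -- dart pairs
  have hdartsnd : c.darts.Nodup := List.Nodup.of_map _ hc.edges_nodup
  set P1 : List (I × I) := c.darts.map (fun e => e.toProd) with hP1
  set P2 : List (I × I) := c.darts.map (fun e => e.toProd.swap) with hP2
  have htoProd_inj : Function.Injective (fun e : (dynkinGraph C).Dart => e.toProd) :=
    fun a b hab => SimpleGraph.Dart.ext a b hab
  have hP1nd : P1.Nodup := hdartsnd.map htoProd_inj
  have hP2nd : P2.Nodup := hdartsnd.map (Prod.swap_injective.comp htoProd_inj)
  have hdisj : Disjoint P1.toFinset P2.toFinset := by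
    rw [Finset.disjoint_left]
    intro p hp1 hp2
    obtain ⟨e1, he1, he1p⟩ := List.mem_map.mp (List.mem_toFinset.mp hp1)
    obtain ⟨e2, he2, he2p⟩ := List.mem_map.mp (List.mem_toFinset.mp hp2)
    have hedge : e1.edge = e2.edge := by
      have hx : ∀ e : (dynkinGraph C).Dart, e.edge = Sym2.mk e.toProd.1 e.toProd.2 := fun e => rfl
      rw [hx, hx]
      rw [he1p, ← he2p]
      exact Sym2.mk_prod_swap_eq
    have he12 : e1 = e2 := by
      have := List.inj_on_of_nodup_map (f := SimpleGraph.Dart.edge) hc.edges_nodup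
      exact this he1 he2 hedge
    rw [he12] at he1p
    have h7 : e2.toProd.swap = e2.toProd := by rw [he2p, ← he1p]
    have heq : e2.toProd.2 = e2.toProd.1 := congrArg Prod.fst h7
    exact e2.adj.ne heq.symm
  set F : Finset (I × I) := P1.toFinset ∪ P2.toFinset with hF
  have hsubF : F ⊆ S.offDiag := by
    intro p hp
    rcases Finset.mem_union.mp hp with hp | hp
    · obtain ⟨e, he, hep⟩ := List.mem_map.mp (List.mem_toFinset.mp hp)
      refine Finset.mem_offDiag.mpr ⟨?_, ?_, ?_⟩
      · rw [hS, ← hep]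
        exact List.mem_toFinset.mpr (hmemT _ (c.dart_fst_mem_support_of_mem_darts he))
      · rw [hS, ← hep]
        exact List.mem_toFinset.mpr (hmemT _ (c.dart_snd_mem_support_of_mem_darts he))
      · rw [← hep]; exact e.adj.ne
    · obtain ⟨e, he, hep⟩ := List.mem_map.mp (List.mem_toFinset.mp hp)
      refine Finset.mem_offDiag.mpr ⟨?_, ?_, ?_⟩
      · rw [hS, ← hep]
        exact List.mem_toFinset.mpr (hmemT _ (c.dart_snd_mem_support_of_mem_darts he))
      · rw [hS, ← hep]
        exact List.mem_toFinset.mpr (hmemT _ (c.dart_fst_mem_support_of_mem_darts he))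
      · rw [← hep]; exact e.adj.ne.symm
  have hoffb : ∑ p ∈ S.offDiag, Mq C d p.1 p.2 ≤ ∑ p ∈ F, Mq C d p.1 p.2 := by
    rw [← Finset.sum_sdiff hsubF]
    have : ∑ p ∈ S.offDiag \ F, Mq C d p.1 p.2 ≤ 0 := by
      refine Finset.sum_nonpos fun p hp => ?_
      have hpo := Finset.mem_sdiff.mp hp
      exact Mq_offdiag_nonpos h (Finset.mem_offDiag.mp hpo.1).2.2
    linarith
  have hFsum : ∑ p ∈ F, Mq C d p.1 p.2
      = (c.darts.map (fun e => Mq C d e.toProd.1 e.toProd.2)).sum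
        + (c.darts.map (fun e => Mq C d e.toProd.2 e.toProd.1)).sum := by
    rw [hF, Finset.sum_union hdisj,
      List.sum_toFinset _ hP1nd, List.sum_toFinset _ hP2nd]
    rw [hP1, hP2]
    simp only [List.map_map]
    rfl
  -- bound each dart sum
  have hdartbound : ∀ e ∈ c.darts,
      Mq C d e.toProd.1 e.toProd.2 + Mq C d e.toProd.2 e.toProd.1
        ≤ -((d e.toProd.1 : ℚ)) - (d e.toProd.2 : ℚ) := by
    intro e _
    rw [Mq_adj h e.adj, Mq_adj h e.adj.symm]
    have h1 : (d e.toProd.1 : ℤ) ≤ max (d e.toProd.1) (d e.toProd.2) := le_max_left _ _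
    have h2 : (d e.toProd.2 : ℤ) ≤ max (d e.toProd.2) (d e.toProd.1) := le_max_left _ _
    have h3 : max (d e.toProd.2) (d e.toProd.1) = max (d e.toProd.1) (d e.toProd.2) :=
      max_comm _ _
    rw [h3]
    have h1' : (d e.toProd.1 : ℚ) ≤ ((max (d e.toProd.1) (d e.toProd.2) : ℤ) : ℚ) := by
      exact_mod_cast h1
    have h2' : (d e.toProd.2 : ℚ) ≤ ((max (d e.toProd.1) (d e.toProd.2) : ℤ) : ℚ) := by
      rw [h3] at h2; exact_mod_cast h2
    linarith
  have hsum1 : (c.darts.map (fun e => (d e.toProd.1 : ℚ))).sum = ∑ i ∈ S, (d i : ℚ) := by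
    have e1 : (c.darts.map (fun e => (d e.toProd.1 : ℚ)))
        = List.map (fun x => (d x : ℚ)) c.support.dropLast := by
      rw [← SimpleGraph.Walk.map_fst_darts, List.map_map]
      rfl
    rw [e1, List.sum_toFinset _ hTnd]
    exact List.Perm.sum_eq (hdropLast_perm.map _)
  have hsum2 : (c.darts.map (fun e => (d e.toProd.2 : ℚ))).sum = ∑ i ∈ S, (d i : ℚ) := by
    have e1 : (c.darts.map (fun e => (d e.toProd.2 : ℚ)))
        = List.map (fun x => (d x : ℚ)) c.support.tail := by
      rw [← SimpleGraph.Walk.map_snd_darts, List.map_map]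
      rfl
    rw [e1, List.sum_toFinset _ hTnd]
  have hdartTotal :
      (c.darts.map (fun e => Mq C d e.toProd.1 e.toProd.2)).sum
        + (c.darts.map (fun e => Mq C d e.toProd.2 e.toProd.1)).sum
      ≤ -(∑ i ∈ S, (d i : ℚ)) - ∑ i ∈ S, (d i : ℚ) := by
    have hle := List.sum_le_sum (l := c.darts)
      (f := fun e => Mq C d e.toProd.1 e.toProd.2 + Mq C d e.toProd.2 e.toProd.1)
      (g := fun e => -((d e.toProd.1 : ℚ)) - (d e.toProd.2 : ℚ)) hdartbound
    rw [show (c.darts.map (fun e => Mq C d e.toProd.1 e.toProd.2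
        + Mq C d e.toProd.2 e.toProd.1)).sum
      = (c.darts.map (fun e => Mq C d e.toProd.1 e.toProd.2)).sum
        + (c.darts.map (fun e => Mq C d e.toProd.2 e.toProd.1)).sum from ?_] at hle
    · rw [show (c.darts.map (fun e => -((d e.toProd.1 : ℚ)) - (d e.toProd.2 : ℚ))).sum
        = -((c.darts.map (fun e => (d e.toProd.1 : ℚ))).sum)
          - (c.darts.map (fun e => (d e.toProd.2 : ℚ))).sum from ?_] at hle
      · rw [hsum1, hsum2] at hle
        exact hle
      · induction c.darts with
        | nil => simp
        | cons a l ih => simp [ih]; ring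
    · induction c.darts with
      | nil => simp
      | cons a l ih => simp [ih]; ring
  have hdiagS : ∑ i ∈ S, Mq C d i i = ∑ i ∈ S, 2 * (d i : ℚ) :=
    Finset.sum_congr rfl fun i _ => Mq_diag h i
  rw [hQ1, hQ2, hdiagS] at hpos
  have : ∑ i ∈ S, 2 * (d i : ℚ) = 2 * ∑ i ∈ S, (d i : ℚ) := by
    rw [Finset.mul_sum]
  rw [this] at hpos
  linarith [hoffb, hFsum, hdartTotal]

end Acyclic

section Dist
variable {C : I → I → ℤ} {d : I → ℤ}
open SimpleGraph

lemma dist_eq_zero_iff (h : Hyp C d) {a b : I} :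
    (dynkinGraph C).dist a b = 0 ↔ a = b := by
  rw [SimpleGraph.dist_eq_zero_iff_eq_or_not_reachable]
  constructor
  · rintro (rfl | hr)
    · rfl
    · exact absurd (h.hconn a b) hr
  · intro hab; exact Or.inl hab

lemma dist_adj_one (h : Hyp C d) {a b : I} (hab : (dynkinGraph C).Adj a b) :
    (dynkinGraph C).dist a b = 1 := by
  have hle : (dynkinGraph C).dist a b ≤ 1 := by
    have := SimpleGraph.dist_le (SimpleGraph.Walk.cons hab SimpleGraph.Walk.nil)
    simpa using this
  have hne : (dynkinGraph C).dist a b ≠ 0 := by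
    intro h0
    exact hab.ne ((dist_eq_zero_iff h).mp h0)
  omega

lemma dist_adj_ne (h : Hyp C d) {x y s : I} (hxy : (dynkinGraph C).Adj x y) :
    (dynkinGraph C).dist s x ≠ (dynkinGraph C).dist s y := by
  intro heq
  have hac := acyclic h
  obtain ⟨p, hp⟩ := h.hconn.exists_walk_length_eq_dist s x
  have hppath : p.IsPath := SimpleGraph.Walk.isPath_of_length_eq_dist p hp
  by_cases hy : y ∈ p.support
  · -- y on the geodesic to x
    have hspec := SimpleGraph.Walk.take_spec p hy
    have hlen : (p.takeUntil y hy).length + (p.dropUntil y hy).length = p.length := by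
      rw [← SimpleGraph.Walk.length_append, hspec]
    have hd1 : (dynkinGraph C).dist s y ≤ (p.takeUntil y hy).length :=
      SimpleGraph.dist_le _
    have hdrop0 : (p.dropUntil y hy).length = 0 := by omega
    have : y = x := SimpleGraph.Walk.eq_of_length_eq_zero hdrop0
    exact hxy.ne this.symm
  · -- extend the geodesic by the edge
    set w : (dynkinGraph C).Walk s y :=
      (SimpleGraph.Walk.cons hxy.symm p.reverse).reverse with hwdef
    have hwpath : w.IsPath := by
      apply SimpleGraph.Walk.IsPath.reverse
      rw [SimpleGraph.Walk.cons_isPath_iff]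
      refine ⟨hppath.reverse, ?_⟩
      rwa [SimpleGraph.Walk.support_reverse, List.mem_reverse]
    have hwlen : w.length = p.length + 1 := by
      rw [hwdef, SimpleGraph.Walk.length_reverse, SimpleGraph.Walk.length_cons,
        SimpleGraph.Walk.length_reverse]
    obtain ⟨q, hq⟩ := h.hconn.exists_walk_length_eq_dist s y
    have hqpath : q.IsPath := SimpleGraph.Walk.isPath_of_length_eq_dist q hq
    have huniq := (SimpleGraph.isAcyclic_iff_path_unique.mp hac)
      (⟨w, hwpath⟩ : (dynkinGraph C).Path s y) ⟨q, hqpath⟩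
    have hlen := congrArg (fun (r : (dynkinGraph C).Path s y) => r.val.length) huniq
    simp only at hlen
    omega

lemma dist_adj_cases (h : Hyp C d) {i k : I} (j : I) (hik : (dynkinGraph C).Adj i k) :
    (dynkinGraph C).dist k j + 1 = (dynkinGraph C).dist i j ∨
      (dynkinGraph C).dist k j = (dynkinGraph C).dist i j + 1 := by
  have h1 : (dynkinGraph C).dist k j ≤ (dynkinGraph C).dist k i + (dynkinGraph C).dist i j :=
    h.hconn.dist_triangle
  have h2 : (dynkinGraph C).dist i j ≤ (dynkinGraph C).dist i k + (dynkinGraph C).dist k j :=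
    h.hconn.dist_triangle
  have h3 : (dynkinGraph C).dist i k = 1 := dist_adj_one h hik
  have h4 : (dynkinGraph C).dist k i = 1 := dist_adj_one h hik.symm
  have h5 : (dynkinGraph C).dist j k ≠ (dynkinGraph C).dist j i := dist_adj_ne h hik.symm
  rw [SimpleGraph.dist_comm (u := j) (v := k), SimpleGraph.dist_comm (u := j) (v := i)] at h5
  omega

lemma exists_geodesic_neighbor (h : Hyp C d) {i j : I}
    (hij : 1 ≤ (dynkinGraph C).dist i j) :
    ∃ k, (dynkinGraph C).Adj i k ∧
      (dynkinGraph C).dist k j + 1 = (dynkinGraph C).dist i j := by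
  obtain ⟨p, hp⟩ := h.hconn.exists_walk_length_eq_dist i j
  cases p with
  | nil => rw [← hp] at hij; simp at hij
  | @cons _ k _ ha q =>
    refine ⟨k, ha, ?_⟩
    have hq : q.length + 1 = (dynkinGraph C).dist i j := by
      simpa [Nat.add_comm] using hp
    have hle : (dynkinGraph C).dist k j ≤ q.length := SimpleGraph.dist_le q
    rcases dist_adj_cases h j ha with hc | hc
    · omega
    · omega

lemma geodesic_neighbor_unique (h : Hyp C d) {i j k k' : I}
    (hk : (dynkinGraph C).Adj i k)
    (hdk : (dynkinGraph C).dist k j + 1 = (dynkinGraph C).dist i j)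
    (hk' : (dynkinGraph C).Adj i k')
    (hdk' : (dynkinGraph C).dist k' j + 1 = (dynkinGraph C).dist i j) :
    k = k' := by
  have hac := acyclic h
  obtain ⟨q1, hq1⟩ := h.hconn.exists_walk_length_eq_dist k j
  obtain ⟨q2, hq2⟩ := h.hconn.exists_walk_length_eq_dist k' j
  set w1 : (dynkinGraph C).Walk i j := SimpleGraph.Walk.cons hk q1 with hw1
  set w2 : (dynkinGraph C).Walk i j := SimpleGraph.Walk.cons hk' q2 with hw2
  have hl1 : w1.length = (dynkinGraph C).dist i j := by
    rw [hw1, SimpleGraph.Walk.length_cons]; omega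
  have hl2 : w2.length = (dynkinGraph C).dist i j := by
    rw [hw2, SimpleGraph.Walk.length_cons]; omega
  have hp1 : w1.IsPath := SimpleGraph.Walk.isPath_of_length_eq_dist w1 hl1
  have hp2 : w2.IsPath := SimpleGraph.Walk.isPath_of_length_eq_dist w2 hl2
  have huniq := (SimpleGraph.isAcyclic_iff_path_unique.mp hac)
    (⟨w1, hp1⟩ : (dynkinGraph C).Path i j) ⟨w2, hp2⟩
  have hval : w1 = w2 := congrArg Subtype.val huniq
  have hsup := congrArg SimpleGraph.Walk.support hval
  rw [hw1, hw2, SimpleGraph.Walk.support_cons, SimpleGraph.Walk.support_cons,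
    q1.support_eq_cons, q2.support_eq_cons] at hsup
  simp only [List.cons.injEq] at hsup
  exact hsup.2.1

end Dist

section ValleyPeak
variable {C : I → I → ℤ} {d : I → ℤ}

lemma qf_line (h : Hyp C d) (a : ℕ → I) (n : ℕ)
    (hinj : ∀ s ≤ n, ∀ t ≤ n, a s = a t → s = t)
    (hnonadj : ∀ s t, s + 2 ≤ t → t ≤ n → C (a s) (a t) = 0)
    (x : ℕ → ℚ) (hx0 : x 0 ≠ 0) :
    0 < ∑ s ∈ Finset.range (n+1), x s ^ 2 * Mq C d (a s) (a s)
        + ∑ s ∈ Finset.range n,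
            (x s * x (s+1) * (Mq C d (a s) (a (s+1)) + Mq C d (a (s+1)) (a s))) := by
  have hvne := indicator_ne_zero a x n hinj 0 (Nat.zero_le n) hx0
  have hpos := h.hposdef _ hvne
  have hq := Qexpand C d a x n
  unfold Mq at hq ⊢
  rw [hq] at hpos
  rw [sum2 (fun s t => x s * x t * ((d (a s) * C (a s) (a t) : ℤ) : ℚ)) n ?_] at hpos
  · calc (0:ℚ) < _ := hpos
    _ = _ := by
      congr 1
      · exact Finset.sum_congr rfl fun s _ => by ring
      · exact Finset.sum_congr rfl fun s _ => by ring
  · intro s t h2 htn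
    constructor
    · show x s * x t * ((d (a s) * C (a s) (a t) : ℤ) : ℚ) = 0
      rw [hnonadj s t h2 htn]
      push_cast
      ring
    · show x t * x s * ((d (a t) * C (a t) (a s) : ℤ) : ℚ) = 0
      rw [(czero_iff h (a t) (a s)).mpr (hnonadj s t h2 htn)]
      push_cast
      ring

lemma no_flat_valley (h : Hyp C d) (a : ℕ → I) (n : ℕ) (hn : 2 ≤ n)
    (hinj : ∀ s ≤ n, ∀ t ≤ n, a s = a t → s = t)
    (hadj : ∀ s, s < n → (dynkinGraph C).Adj (a s) (a (s+1)))
    (hnonadj : ∀ s t, s + 2 ≤ t → t ≤ n → C (a s) (a t) = 0)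
    (m : ℤ) (hm : ∀ s, 0 < s → s < n → d (a s) = m)
    (hA : m < d (a 0)) (hB : m < d (a n)) : False := by
  obtain ⟨K, rfl⟩ : ∃ K, n = K + 2 := ⟨n - 2, by omega⟩
  set A := d (a 0) with hAdef
  set B := d (a (K+2)) with hBdef
  have hm1 : d (a 1) = m := hm 1 (by omega) (by omega)
  have hmlast : d (a (K+1)) = m := hm (K+1) (by omega) (by omega)
  have hmpos : 0 < m := by rw [← hm1]; exact h.hd _
  have hA2 : 2 * m ≤ A := by
    have := edge_two_mul h (hadj 0 (by omega)) (by rw [hm1]; exact hA)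
    rwa [hm1] at this
  have hB2 : 2 * m ≤ B := by
    have hadj' := (hadj (K+1) (by omega)).symm
    have := edge_two_mul h hadj' (by rw [hmlast]; exact hB)
    rwa [hmlast] at this
  -- weights
  set x : ℕ → ℚ := fun s => if s = 0 then 2*(m:ℚ) else if s = K + 2 then (A:ℚ) else 2*(A:ℚ)
    with hxdef
  have hx0v : x 0 = 2*(m:ℚ) := by simp [hxdef]
  have hxlast : x (K+2) = (A:ℚ) := by simp [hxdef]
  have hxmid : ∀ s, s ≠ 0 → s ≠ K+2 → x s = 2*(A:ℚ) := by
    intro s h1 h2; simp [hxdef, h1, h2]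
  have hx0 : x 0 ≠ 0 := by
    rw [hx0v]
    have : (0:ℚ) < (m:ℚ) := by exact_mod_cast hmpos
    positivity
  have hpos := qf_line h a (K+2) hinj hnonadj x hx0
  -- evaluate the diagonal sum
  have hApos : (0:ℤ) < A := h.hd _
  have hdiagsum : ∑ s ∈ Finset.range (K+2+1), x s ^ 2 * Mq C d (a s) (a s)
      = (2*(m:ℚ))^2 * (2*(A:ℚ)) + (K+1) * ((2*(A:ℚ))^2 * (2*(m:ℚ))) + (A:ℚ)^2 * (2*(B:ℚ)) := by
    rw [Finset.sum_range_succ, Finset.sum_range_succ']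
    have hint : ∀ s ∈ Finset.range (K+1),
        x (s+1) ^ 2 * Mq C d (a (s+1)) (a (s+1)) = (2*(A:ℚ))^2 * (2*(m:ℚ)) := by
      intro s hs
      have hs' := Finset.mem_range.mp hs
      rw [Mq_diag h, hm (s+1) (by omega) (by omega), hxmid (s+1) (by omega) (by omega)]
    rw [Finset.sum_congr rfl hint, Finset.sum_const, Finset.card_range]
    rw [Mq_diag h, Mq_diag h, ← hAdef, ← hBdef, hx0v, hxlast]
    push_cast
    ring
  -- evaluate the edge sum
  have hedgesum : ∑ s ∈ Finset.range (K+2),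
      (x s * x (s+1) * (Mq C d (a s) (a (s+1)) + Mq C d (a (s+1)) (a s)))
      = (2*(m:ℚ)) * (2*(A:ℚ)) * (-2*(A:ℚ))
        + K * ((2*(A:ℚ)) * (2*(A:ℚ)) * (-2*(m:ℚ)))
        + (2*(A:ℚ)) * (A:ℚ) * (-2*(B:ℚ)) := by
    rw [Finset.sum_range_succ, Finset.sum_range_succ']
    have hint : ∀ s ∈ Finset.range K,
        x (s+1) * x (s+1+1) * (Mq C d (a (s+1)) (a (s+1+1)) + Mq C d (a (s+1+1)) (a (s+1)))
          = (2*(A:ℚ)) * (2*(A:ℚ)) * (-2*(m:ℚ)) := by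
      intro s hs
      have hs' := Finset.mem_range.mp hs
      rw [Mq_adj h (hadj (s+1) (by omega)), Mq_adj h (hadj (s+1) (by omega)).symm]
      rw [hm (s+1) (by omega) (by omega), hm (s+1+1) (by omega) (by omega),
        hxmid (s+1) (by omega) (by omega), hxmid (s+1+1) (by omega) (by omega), max_self]
      push_cast
      ring
    rw [Finset.sum_congr rfl hint, Finset.sum_const, Finset.card_range]
    -- first edge
    have he0 : x 0 * x 1 * (Mq C d (a 0) (a 1) + Mq C d (a 1) (a 0))
        = (2*(m:ℚ)) * (2*(A:ℚ)) * (-2*(A:ℚ)) := by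
      rw [Mq_adj h (hadj 0 (by omega)), Mq_adj h (hadj 0 (by omega)).symm]
      rw [hm1, ← hAdef, max_eq_left hA.le, max_comm, max_eq_left hA.le,
        hx0v, hxmid 1 (by omega) (by omega)]
      push_cast
      ring
    -- last edge
    have helast : x (K+1) * x (K+1+1) * (Mq C d (a (K+1)) (a (K+1+1)) + Mq C d (a (K+1+1)) (a (K+1)))
        = (2*(A:ℚ)) * (A:ℚ) * (-2*(B:ℚ)) := by
      rw [Mq_adj h (hadj (K+1) (by omega)), Mq_adj h (hadj (K+1) (by omega)).symm]
      rw [hmlast, ← hBdef, max_eq_right hB.le, max_comm, max_eq_right hB.le,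
        hxmid (K+1) (by omega) (by omega), hxlast]
      push_cast
      ring
    rw [he0, helast]
    ring
  rw [hdiagsum, hedgesum] at hpos
  -- total: 8 m^2 A - 2 A^2 B > 0, contradiction with A,B ≥ 2m
  have hAq : (2*(m:ℚ)) ≤ (A:ℚ) := by exact_mod_cast hA2
  have hBq : (2*(m:ℚ)) ≤ (B:ℚ) := by exact_mod_cast hB2
  have hmq : (0:ℚ) < (m:ℚ) := by exact_mod_cast hmpos
  have hAq0 : (0:ℚ) < (A:ℚ) := by exact_mod_cast hApos
  have hABm : ((2:ℚ)*(m:ℚ))*(2*(m:ℚ)) ≤ (A:ℚ)*(B:ℚ) :=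
    mul_le_mul hAq hBq (by positivity) (by positivity)
  have key : 2*(A:ℚ)*((2*(m:ℚ))*(2*(m:ℚ))) ≤ 2*(A:ℚ)*((A:ℚ)*(B:ℚ)) :=
    mul_le_mul_of_nonneg_left hABm (by positivity)
  nlinarith [hpos, key]

lemma no_flat_peak (h : Hyp C d) (a : ℕ → I) (n : ℕ) (hn : 2 ≤ n)
    (hinj : ∀ s ≤ n, ∀ t ≤ n, a s = a t → s = t)
    (hadj : ∀ s, s < n → (dynkinGraph C).Adj (a s) (a (s+1)))
    (hnonadj : ∀ s t, s + 2 ≤ t → t ≤ n → C (a s) (a t) = 0)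
    (m : ℤ) (hm : ∀ s, 0 < s → s < n → d (a s) = m)
    (hA : d (a 0) < m) (hB : d (a n) < m) : False := by
  obtain ⟨K, rfl⟩ : ∃ K, n = K + 2 := ⟨n - 2, by omega⟩
  set A := d (a 0) with hAdef
  set B := d (a (K+2)) with hBdef
  have hm1 : d (a 1) = m := hm 1 (by omega) (by omega)
  have hmlast : d (a (K+1)) = m := hm (K+1) (by omega) (by omega)
  have hApos : 0 < A := h.hd _
  have hBpos : 0 < B := h.hd _
  have hmpos : 0 < m := by rw [← hm1]; exact h.hd _
  -- divisibility
  have hAdvd : A ∣ m := by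
    have h2 := edge_dvd h (hadj 0 (by omega))
    rw [hm1, ← hAdef, max_eq_right hA.le] at h2
    exact h2
  have hBdvd : B ∣ m := by
    have h2 := edge_dvd h (hadj (K+1) (by omega)).symm
    rw [hmlast, ← hBdef, max_eq_right hB.le] at h2
    exact h2
  obtain ⟨α, hα⟩ := hAdvd
  obtain ⟨β, hβ⟩ := hBdvd
  have hα2 : 2 ≤ α := by nlinarith [hα, hA, hApos]
  have hβ2 : 2 ≤ β := by nlinarith [hβ, hB, hBpos]
  -- weights
  set x : ℕ → ℚ := fun s => if s = 0 then (α:ℚ) else if s = K + 2 then (β:ℚ) else 2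
    with hxdef
  have hx0v : x 0 = (α:ℚ) := by simp [hxdef]
  have hxlast : x (K+2) = (β:ℚ) := by simp [hxdef]
  have hxmid : ∀ s, s ≠ 0 → s ≠ K+2 → x s = 2 := by
    intro s h1 h2; simp [hxdef, h1, h2]
  have hx0 : x 0 ≠ 0 := by
    rw [hx0v]
    have : (0:ℤ) < α := by omega
    have : (0:ℚ) < (α:ℚ) := by exact_mod_cast this
    positivity
  have hpos := qf_line h a (K+2) hinj hnonadj x hx0
  unfold Mq at hpos
  have hdiagsum : ∑ s ∈ Finset.range (K+2+1), x s ^ 2 * ((d (a s) * C (a s) (a s) : ℤ) : ℚ)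
      = (α:ℚ)^2 * (2*(A:ℚ)) + (K+1) * (4 * (2*(m:ℚ))) + (β:ℚ)^2 * (2*(B:ℚ)) := by
    rw [Finset.sum_range_succ, Finset.sum_range_succ']
    have hint : ∀ s ∈ Finset.range (K+1),
        x (s+1) ^ 2 * ((d (a (s+1)) * C (a (s+1)) (a (s+1)) : ℤ) : ℚ) = 4 * (2*(m:ℚ)) := by
      intro s hs
      have hs' := Finset.mem_range.mp hs
      rw [h.hdiag, hm (s+1) (by omega) (by omega), hxmid (s+1) (by omega) (by omega)]
      push_cast
      ring
    rw [Finset.sum_congr rfl hint, Finset.sum_const, Finset.card_range]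
    rw [h.hdiag, h.hdiag, ← hAdef, ← hBdef, hx0v, hxlast]
    push_cast
    ring
  have hedge : ∀ s, s < K + 2 →
      ((d (a s) * C (a s) (a (s+1)) : ℤ) : ℚ) + ((d (a (s+1)) * C (a (s+1)) (a s) : ℤ) : ℚ)
        = -2 * ((max (d (a s)) (d (a (s+1))) : ℤ) : ℚ) := by
    intro s hs
    have h1 := Mq_adj h (hadj s hs)
    have h2 := Mq_adj h (hadj s hs).symm
    unfold Mq at h1 h2
    rw [h1, h2, max_comm (d (a (s+1)))]
    ring
  have hedgesum : ∑ s ∈ Finset.range (K+2),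
      (x s * x (s+1) * (((d (a s) * C (a s) (a (s+1)) : ℤ) : ℚ)
        + ((d (a (s+1)) * C (a (s+1)) (a s) : ℤ) : ℚ)))
      = (α:ℚ) * 2 * (-2*(m:ℚ)) + K * (2 * 2 * (-2*(m:ℚ))) + 2 * (β:ℚ) * (-2*(m:ℚ)) := by
    rw [Finset.sum_range_succ, Finset.sum_range_succ']
    have hint : ∀ s ∈ Finset.range K,
        x (s+1) * x (s+1+1) * (((d (a (s+1)) * C (a (s+1)) (a (s+1+1)) : ℤ) : ℚ)
          + ((d (a (s+1+1)) * C (a (s+1+1)) (a (s+1)) : ℤ) : ℚ))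
          = 2 * 2 * (-2*(m:ℚ)) := by
      intro s hs
      have hs' := Finset.mem_range.mp hs
      rw [hedge (s+1) (by omega), hm (s+1) (by omega) (by omega),
        hm (s+1+1) (by omega) (by omega), max_self,
        hxmid (s+1) (by omega) (by omega), hxmid (s+1+1) (by omega) (by omega)]
    rw [Finset.sum_congr rfl hint, Finset.sum_const, Finset.card_range]
    have he0 : x 0 * x 1 * (((d (a 0) * C (a 0) (a 1) : ℤ) : ℚ)
        + ((d (a 1) * C (a 1) (a 0) : ℤ) : ℚ)) = (α:ℚ) * 2 * (-2*(m:ℚ)) := by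
      rw [hedge 0 (by omega), hm1, ← hAdef, max_eq_right hA.le, hx0v,
        hxmid 1 (by omega) (by omega)]
    have helast : x (K+1) * x (K+1+1) * (((d (a (K+1)) * C (a (K+1)) (a (K+1+1)) : ℤ) : ℚ)
        + ((d (a (K+1+1)) * C (a (K+1+1)) (a (K+1)) : ℤ) : ℚ)) = 2 * (β:ℚ) * (-2*(m:ℚ)) := by
      rw [hedge (K+1) (by omega), hmlast, ← hBdef, max_eq_left hB.le,
        hxmid (K+1) (by omega) (by omega), hxlast]
    rw [he0, helast]
    push_cast
    ring
  rw [hdiagsum, hedgesum] at hpos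
  -- total: 2Aα² + 8m + 2Bβ² - 4αm - 4βm > 0; contradiction
  have eA : (A:ℚ)*(α:ℚ) = (m:ℚ) := by exact_mod_cast hα.symm
  have eB : (B:ℚ)*(β:ℚ) = (m:ℚ) := by exact_mod_cast hβ.symm
  have hα2q : (2:ℚ) ≤ (α:ℚ) := by exact_mod_cast hα2
  have hβ2q : (2:ℚ) ≤ (β:ℚ) := by exact_mod_cast hβ2
  have hmq : (0:ℚ) < (m:ℚ) := by exact_mod_cast hmpos
  have eA2 : (A:ℚ)*((α:ℚ)^2) = (m:ℚ)*(α:ℚ) := by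
    calc (A:ℚ)*((α:ℚ)^2) = ((A:ℚ)*(α:ℚ))*(α:ℚ) := by ring
    _ = (m:ℚ)*(α:ℚ) := by rw [eA]
  have eB2 : (B:ℚ)*((β:ℚ)^2) = (m:ℚ)*(β:ℚ) := by
    calc (B:ℚ)*((β:ℚ)^2) = ((B:ℚ)*(β:ℚ))*(β:ℚ) := by ring
    _ = (m:ℚ)*(β:ℚ) := by rw [eB]
  nlinarith [hpos, eA2, eB2, hα2q, hβ2q, hmq]

lemma no_valley (h : Hyp C d) (a : ℕ → I) (L : ℕ)
    (hinj : ∀ s ≤ L, ∀ t ≤ L, a s = a t → s = t)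
    (hadj : ∀ s, s < L → (dynkinGraph C).Adj (a s) (a (s+1)))
    (hnonadj : ∀ s t, s + 2 ≤ t → t ≤ L → C (a s) (a t) = 0)
    (p q r : ℕ) (hpq : p < q) (hqr : q < r) (hr : r ≤ L)
    (h1 : d (a q) < d (a p)) (h2 : d (a q) < d (a r)) : False := by
  set F := Finset.Icc p r with hF
  have hqF : q ∈ F := Finset.mem_Icc.mpr ⟨by omega, by omega⟩
  obtain ⟨q', hq'F, hq'min⟩ := Finset.exists_min_image F (fun s => d (a s)) ⟨q, hqF⟩
  set m := d (a q') with hmdef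
  have hq'le : m ≤ d (a q) := hq'min q hqF
  obtain ⟨hpq', hq'r⟩ := Finset.mem_Icc.mp hq'F
  have hmp : m < d (a p) := by omega
  have hmr : m < d (a r) := by omega
  have hpltq' : p < q' := by
    rcases Nat.lt_or_ge p q' with hlt | hge
    · exact hlt
    · have : q' = p := by omega
      rw [this] at hmdef
      omega
  have hq'ltr : q' < r := by
    rcases Nat.lt_or_ge q' r with hlt | hge
    · exact hlt
    · have : q' = r := by omega
      rw [this] at hmdef
      omega
  set U := (Finset.Ico p q').filter (fun s => m < d (a s)) with hU
  have hUne : U.Nonempty :=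
    ⟨p, Finset.mem_filter.mpr ⟨Finset.mem_Ico.mpr ⟨le_refl p, hpltq'⟩, hmp⟩⟩
  set u := U.max' hUne with hu
  have huU : u ∈ U := U.max'_mem hUne
  have huIco : u ∈ Finset.Ico p q' := (Finset.mem_filter.mp huU).1
  have hum : m < d (a u) := (Finset.mem_filter.mp huU).2
  have hultq' : u < q' := (Finset.mem_Ico.mp huIco).2
  have hpleu : p ≤ u := (Finset.mem_Ico.mp huIco).1
  set V := (Finset.Ioc q' r).filter (fun s => m < d (a s)) with hV
  have hVne : V.Nonempty :=
    ⟨r, Finset.mem_filter.mpr ⟨Finset.mem_Ioc.mpr ⟨hq'ltr, le_refl r⟩, hmr⟩⟩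
  set v := V.min' hVne with hv
  have hvV : v ∈ V := V.min'_mem hVne
  have hvIoc : v ∈ Finset.Ioc q' r := (Finset.mem_filter.mp hvV).1
  have hvm : m < d (a v) := (Finset.mem_filter.mp hvV).2
  have hq'ltv : q' < v := (Finset.mem_Ioc.mp hvIoc).1
  have hvler : v ≤ r := (Finset.mem_Ioc.mp hvIoc).2
  have hflat : ∀ s, u < s → s < v → d (a s) = m := by
    intro s hs1 hs2
    have hsF : s ∈ F := Finset.mem_Icc.mpr ⟨by omega, by omega⟩
    have hge : m ≤ d (a s) := hq'min s hsF
    rcases eq_or_lt_of_le hge with he | hlt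
    · exact he.symm
    · exfalso
      rcases Nat.lt_trichotomy s q' with hlt2 | heq | hgt2
      · have hsU : s ∈ U := Finset.mem_filter.mpr ⟨Finset.mem_Ico.mpr ⟨by omega, hlt2⟩, hlt⟩
        have := U.le_max' s hsU
        omega
      · rw [heq] at hlt
        omega
      · have hsV : s ∈ V := Finset.mem_filter.mpr ⟨Finset.mem_Ioc.mpr ⟨hgt2, by omega⟩, hlt⟩
        have := V.min'_le s hsV
        omega
  refine no_flat_valley h (fun t => a (u + t)) (v - u) (by omega) ?_ ?_ ?_ m ?_ ?_ ?_
  · intro s hs t ht heq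
    have := hinj (u+s) (by omega) (u+t) (by omega) heq
    omega
  · intro s hs
    have := hadj (u+s) (by omega)
    rwa [show u+s+1 = u+(s+1) by omega] at this
  · intro s t hst ht
    exact hnonadj (u+s) (u+t) (by omega) (by omega)
  · intro s hs1 hs2
    exact hflat (u+s) (by omega) (by omega)
  · show m < d (a (u + 0))
    rwa [Nat.add_zero]
  · show m < d (a (u + (v - u)))
    rwa [show u + (v - u) = v by omega]

lemma no_peak (h : Hyp C d) (a : ℕ → I) (L : ℕ)
    (hinj : ∀ s ≤ L, ∀ t ≤ L, a s = a t → s = t)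
    (hadj : ∀ s, s < L → (dynkinGraph C).Adj (a s) (a (s+1)))
    (hnonadj : ∀ s t, s + 2 ≤ t → t ≤ L → C (a s) (a t) = 0)
    (p q r : ℕ) (hpq : p < q) (hqr : q < r) (hr : r ≤ L)
    (h1 : d (a p) < d (a q)) (h2 : d (a r) < d (a q)) : False := by
  set F := Finset.Icc p r with hF
  have hqF : q ∈ F := Finset.mem_Icc.mpr ⟨by omega, by omega⟩
  obtain ⟨q', hq'F, hq'min⟩ := Finset.exists_max_image F (fun s => d (a s)) ⟨q, hqF⟩
  set m := d (a q') with hmdef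
  have hq'le : d (a q) ≤ m := hq'min q hqF
  obtain ⟨hpq', hq'r⟩ := Finset.mem_Icc.mp hq'F
  have hmp : d (a p) < m := by omega
  have hmr : d (a r) < m := by omega
  have hpltq' : p < q' := by
    rcases Nat.lt_or_ge p q' with hlt | hge
    · exact hlt
    · have : q' = p := by omega
      rw [this] at hmdef
      omega
  have hq'ltr : q' < r := by
    rcases Nat.lt_or_ge q' r with hlt | hge
    · exact hlt
    · have : q' = r := by omega
      rw [this] at hmdef
      omega
  set U := (Finset.Ico p q').filter (fun s => d (a s) < m) with hU
  have hUne : U.Nonempty :=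
    ⟨p, Finset.mem_filter.mpr ⟨Finset.mem_Ico.mpr ⟨le_refl p, hpltq'⟩, hmp⟩⟩
  set u := U.max' hUne with hu
  have huU : u ∈ U := U.max'_mem hUne
  have huIco : u ∈ Finset.Ico p q' := (Finset.mem_filter.mp huU).1
  have hum : d (a u) < m := (Finset.mem_filter.mp huU).2
  have hultq' : u < q' := (Finset.mem_Ico.mp huIco).2
  have hpleu : p ≤ u := (Finset.mem_Ico.mp huIco).1
  set V := (Finset.Ioc q' r).filter (fun s => d (a s) < m) with hV
  have hVne : V.Nonempty :=
    ⟨r, Finset.mem_filter.mpr ⟨Finset.mem_Ioc.mpr ⟨hq'ltr, le_refl r⟩, hmr⟩⟩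
  set v := V.min' hVne with hv
  have hvV : v ∈ V := V.min'_mem hVne
  have hvIoc : v ∈ Finset.Ioc q' r := (Finset.mem_filter.mp hvV).1
  have hvm : d (a v) < m := (Finset.mem_filter.mp hvV).2
  have hq'ltv : q' < v := (Finset.mem_Ioc.mp hvIoc).1
  have hvler : v ≤ r := (Finset.mem_Ioc.mp hvIoc).2
  have hflat : ∀ s, u < s → s < v → d (a s) = m := by
    intro s hs1 hs2
    have hsF : s ∈ F := Finset.mem_Icc.mpr ⟨by omega, by omega⟩
    have hge : d (a s) ≤ m := hq'min s hsF
    rcases eq_or_lt_of_le hge with he | hlt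
    · exact he
    · exfalso
      rcases Nat.lt_trichotomy s q' with hlt2 | heq | hgt2
      · have hsU : s ∈ U := Finset.mem_filter.mpr ⟨Finset.mem_Ico.mpr ⟨by omega, hlt2⟩, hlt⟩
        have := U.le_max' s hsU
        omega
      · rw [heq] at hlt
        omega
      · have hsV : s ∈ V := Finset.mem_filter.mpr ⟨Finset.mem_Ioc.mpr ⟨hgt2, by omega⟩, hlt⟩
        have := V.min'_le s hsV
        omega
  refine no_flat_peak h (fun t => a (u + t)) (v - u) (by omega) ?_ ?_ ?_ m ?_ ?_ ?_
  · intro s hs t ht heq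
    have := hinj (u+s) (by omega) (u+t) (by omega) heq
    omega
  · intro s hs
    have := hadj (u+s) (by omega)
    rwa [show u+s+1 = u+(s+1) by omega] at this
  · intro s t hst ht
    exact hnonadj (u+s) (u+t) (by omega) (by omega)
  · intro s hs1 hs2
    exact hflat (u+s) (by omega) (by omega)
  · show d (a (u + 0)) < m
    rwa [Nat.add_zero]
  · show d (a (u + (v - u))) < m
    rwa [show u + (v - u) = v by omega]

end ValleyPeak


section NBV
variable {C : I → I → ℤ} {d : I → ℤ}

lemma nbv (h : Hyp C d) {i j k : I} (hik : (dynkinGraph C).Adj i k)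
    (hdk : (dynkinGraph C).dist k j + 1 = (dynkinGraph C).dist i j) :
    min (d i) (d j) ≤ d k ∧ d k ≤ max (d i) (d j) := by
  by_cases hkj : k = j
  · subst hkj
    exact ⟨min_le_right _ _, le_max_right _ _⟩
  have hLkj : (dynkinGraph C).dist k j ≠ 0 := fun h0 => hkj ((dist_eq_zero_iff h).mp h0)
  set L := (dynkinGraph C).dist i j with hL
  have hL2 : 2 ≤ L := by omega
  obtain ⟨q, hq⟩ := h.hconn.exists_walk_length_eq_dist k j
  set w : (dynkinGraph C).Walk i j := SimpleGraph.Walk.cons hik q with hw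
  have hwlen : w.length = L := by
    rw [hw, SimpleGraph.Walk.length_cons]; omega
  have hwpath : w.IsPath := SimpleGraph.Walk.isPath_of_length_eq_dist w (by rw [hwlen])
  set A : ℕ → I := fun s => w.support.getD s j with hA
  have ha0 : A 0 = i := getD_support_zero w j
  have ha1 : A 1 = k := by
    show w.support.getD 1 j = k
    rw [hw, SimpleGraph.Walk.support_cons]
    simp only [List.getD_cons_succ]
    exact getD_support_zero q j
  have haL : A L = j := by
    show w.support.getD L j = j
    rw [← hwlen]
    exact getD_support_length w j
  have hinj : ∀ s ≤ L, ∀ t ≤ L, A s = A t → s = t := by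
    intro s hs t ht heq
    exact getD_support_inj w hwpath j (by omega) (by omega) heq
  have hadjA : ∀ s, s < L → (dynkinGraph C).Adj (A s) (A (s+1)) := by
    intro s hs
    exact getD_support_adj w j (by omega)
  have hnonadj : ∀ s t, s + 2 ≤ t → t ≤ L → C (A s) (A t) = 0 := by
    intro s t hst ht
    by_contra hC
    have hne : A s ≠ A t := by
      intro he
      have := hinj s (by omega) t (by omega) he
      omega
    have hadj2 : (dynkinGraph C).Adj (A s) (A t) := (adj_iff h).mpr ⟨hne, hC⟩
    obtain ⟨w1, w2, hw1, _⟩ := walk_split w j s (by omega)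
    obtain ⟨w1', w2', _, hw2'⟩ := walk_split w j t (by omega)
    have hshort := SimpleGraph.dist_le (w1.append (SimpleGraph.Walk.cons hadj2 w2'))
    rw [SimpleGraph.Walk.length_append, SimpleGraph.Walk.length_cons, hw1, hw2', hwlen] at hshort
    rw [← hL] at hshort
    omega
  constructor
  · by_contra hmin
    push_neg at hmin
    rw [lt_min_iff] at hmin
    refine no_valley h A L hinj hadjA hnonadj 0 1 L (by omega) (by omega) (le_refl L) ?_ ?_
    · rw [ha0, ha1]; exact hmin.1
    · rw [ha1, haL]; exact hmin.2
  · by_contra hmax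
    push_neg at hmax
    rw [max_lt_iff] at hmax
    refine no_peak h A L hinj hadjA hnonadj 0 1 L (by omega) (by omega) (le_refl L) ?_ ?_
    · rw [ha0, ha1]; exact hmax.1
    · rw [ha1, haL]; exact hmax.2

end NBV

section Hlem
variable {C : I → I → ℤ} {d : I → ℤ}

lemma Hm_zero_apply (i j : I) : Hm C 0 i j = 0 := by
  show (0 : Matrix I I ℚ) i j = 0
  simp

lemma Hm_one_apply (i j : I) : Hm C 1 i j = if i = j then 1 else 0 := by
  show (1 : Matrix I I ℚ) i j = _
  rw [Matrix.one_apply]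

lemma Aabs_apply_ne {i j : I} (hne : i ≠ j) : Aabs C i j = ((-(C i j) : ℤ) : ℚ) := by
  show (if i = j then (0:ℚ) else ((-(C i j) : ℤ) : ℚ)) = _
  rw [if_neg hne]

lemma Aabs_apply_diag (i : I) : Aabs C i i = 0 := by
  show (if i = i then (0:ℚ) else ((-(C i i) : ℤ) : ℚ)) = 0
  rw [if_pos rfl]

lemma Hm_succ_apply (n : ℕ) (i j : I) :
    Hm C (n+2) i j = (∑ k, Aabs C i k * Hm C (n+1) k j) - Hm C n i j := by
  show (Aabs C * Hm C (n+1) - Hm C n) i j = _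
  rw [Matrix.sub_apply, Matrix.mul_apply]

lemma Aabs_eq_zero_of_not_adj (h : Hyp C d) {i k : I}
    (hnadj : ¬ (dynkinGraph C).Adj i k) : Aabs C i k = 0 := by
  by_cases hik : i = k
  · subst hik; exact Aabs_apply_diag i
  · have hC : C i k = 0 := by
      by_contra hC
      exact hnadj ((adj_iff h).mpr ⟨hik, hC⟩)
    rw [Aabs_apply_ne hik, hC]
    simp

lemma H_zero_of_le (h : Hyp C d) :
    ∀ (n : ℕ) (i j : I), n ≤ (dynkinGraph C).dist i j → Hm C n i j = 0 := by
  intro n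
  induction n using Nat.strong_induction_on with
  | _ n ih =>
    rcases n with _ | _ | n
    · intro i j _; exact Hm_zero_apply i j
    · intro i j hle
      rw [Hm_one_apply, if_neg]
      intro heq
      subst heq
      rw [SimpleGraph.dist_self] at hle
      omega
    · intro i j hle
      rw [Hm_succ_apply]
      rw [ih n (by omega) i j (by omega), sub_zero]
      apply Finset.sum_eq_zero
      intro k _
      by_cases hadjk : (dynkinGraph C).Adj i k
      · have hcase := dist_adj_cases h j hadjk
        have hge : n + 1 ≤ (dynkinGraph C).dist k j := by omega
        rw [ih (n+1) (by omega) k j hge, mul_zero]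
      · rw [Aabs_eq_zero_of_not_adj h hadjk, zero_mul]

lemma H_zero_of_parity (h : Hyp C d) :
    ∀ (n : ℕ) (i j : I), n % 2 = (dynkinGraph C).dist i j % 2 → Hm C n i j = 0 := by
  intro n
  induction n using Nat.strong_induction_on with
  | _ n ih =>
    rcases n with _ | _ | n
    · intro i j _; exact Hm_zero_apply i j
    · intro i j hpar
      rw [Hm_one_apply, if_neg]
      intro heq
      subst heq
      rw [SimpleGraph.dist_self] at hpar
      omega
    · intro i j hpar
      rw [Hm_succ_apply]
      rw [ih n (by omega) i j (by omega), sub_zero]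
      apply Finset.sum_eq_zero
      intro k _
      by_cases hadjk : (dynkinGraph C).Adj i k
      · have hcase := dist_adj_cases h j hadjk
        have hpark : (n+1) % 2 = (dynkinGraph C).dist k j % 2 := by omega
        rw [ih (n+1) (by omega) k j hpark, mul_zero]
      · rw [Aabs_eq_zero_of_not_adj h hadjk, zero_mul]

lemma max_mul_key {a b c : ℤ} (h1 : min a b ≤ c) (h2 : c ≤ max a b) :
    max a c * max c b = c * max a b := by
  rcases le_total a b with hab | hab
  · rw [min_eq_left hab] at h1
    rw [max_eq_right hab] at h2
    rw [max_eq_right h1, max_eq_right h2, max_eq_right hab]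
  · rw [min_eq_right hab] at h1
    rw [max_eq_left hab] at h2
    rw [max_eq_left h2, max_eq_left h1, max_eq_left hab]
    ring

lemma H_max (h : Hyp C d) :
    ∀ (n : ℕ) (i j : I), (dynkinGraph C).dist i j = n →
      (d i : ℚ) * Hm C (n+1) i j = ((max (d i) (d j) : ℤ) : ℚ) := by
  intro n
  induction n using Nat.strong_induction_on with
  | _ n ih =>
    rcases n with _ | n
    · intro i j hdist
      have : i = j := (dist_eq_zero_iff h).mp hdist
      subst this
      rw [Hm_one_apply, if_pos rfl, max_self]
      simp
    · intro i j hdist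
      rw [Hm_succ_apply]
      have hL1 : 1 ≤ (dynkinGraph C).dist i j := by omega
      obtain ⟨k₀, hk₀adj, hk₀d⟩ := exists_geodesic_neighbor h hL1
      have hHn : Hm C n i j = 0 := H_zero_of_le h n i j (by omega)
      rw [hHn, sub_zero]
      rw [Finset.sum_eq_single k₀ ?_ ?_]
      · have hk0dist : (dynkinGraph C).dist k₀ j = n := by omega
        have ihk := ih n (by omega) k₀ j hk0dist
        have hnbv := nbv h hk₀adj hk₀d
        have hkey := max_mul_key hnbv.1 hnbv.2
        have hdk0 : ((d k₀ : ℤ) : ℚ) ≠ 0 := by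
          have := h.hd k₀
          exact_mod_cast this.ne'
        have e1 : (d i : ℚ) * Aabs C i k₀ = ((max (d i) (d k₀) : ℤ) : ℚ) := by
          rw [Aabs_apply_ne hk₀adj.ne]
          have := edge_eq h hk₀adj
          have e : d i * (-(C i k₀)) = max (d i) (d k₀) := by linarith
          exact_mod_cast e
        apply mul_left_cancel₀ hdk0
        calc ((d k₀:ℤ):ℚ) * ((d i:ℚ) * (Aabs C i k₀ * Hm C (n+1) k₀ j))
            = ((d i:ℚ) * Aabs C i k₀) * ((d k₀:ℚ) * Hm C (n+1) k₀ j) := by push_cast; ring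
          _ = ((max (d i) (d k₀):ℤ):ℚ) * ((max (d k₀) (d j):ℤ):ℚ) := by rw [e1, ihk]
          _ = ((d k₀:ℤ):ℚ) * ((max (d i) (d j) : ℤ) : ℚ) := by exact_mod_cast congrArg (fun z : ℤ => (z:ℚ)) hkey
      · intro k _ hne
        by_cases hadjk : (dynkinGraph C).Adj i k
        · rcases dist_adj_cases h j hadjk with hc | hc
          · exact absurd (geodesic_neighbor_unique h hadjk (by omega) hk₀adj hk₀d) hne
          · rw [H_zero_of_le h (n+1) k j (by omega), mul_zero]
        · rw [Aabs_eq_zero_of_not_adj h hadjk, zero_mul]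
      · intro habs
        exact absurd (Finset.mem_univ k₀) habs

end Hlem
section Series
variable {C : I → I → ℤ} {d : I → ℤ}

def Zps (C : I → I → ℤ) : Matrix I I K :=
  Matrix.of fun i j => HahnSeries.ofPowerSeries ℤ ℚ (PowerSeries.mk fun n => Hm C n i j)

lemma tv_eq : tv = HahnSeries.single (1:ℤ) (1:ℚ) := rfl

lemma tv_ne_zero : (tv : K) ≠ 0 := by
  unfold tv
  exact HahnSeries.single_ne_zero one_ne_zero

/-- the power series level matrix identity -/
lemma ps_identity (C : I → I → ℤ) :
    (Matrix.of fun i j => if i = j then (PowerSeries.X:PowerSeries ℚ)^2 + 1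
        else PowerSeries.C ((C i j : ℚ)) * PowerSeries.X) *
      (Matrix.of fun i j => PowerSeries.mk fun n => Hm C n i j)
    = (PowerSeries.X : PowerSeries ℚ) • (1 : Matrix I I (PowerSeries ℚ)) := by
  refine Matrix.ext fun i j => ?_
  rw [Matrix.mul_apply]
  rw [← Finset.add_sum_erase Finset.univ _ (Finset.mem_univ i)]
  simp only [Matrix.of_apply, eq_self_iff_true, if_true, Matrix.smul_apply, Matrix.one_apply,
    smul_eq_mul]
  apply PowerSeries.ext
  intro n
  have herase : ∀ k ∈ Finset.univ.erase i, ¬ (i = k) := by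
    intro k hk
    exact fun he => (Finset.mem_erase.mp hk).1 he.symm
  rw [Finset.sum_congr rfl (fun k hk => by rw [if_neg (herase k hk)])]
  -- now compute coefficients
  rw [map_add]
  rw [add_mul, one_mul, map_add]
  rw [map_sum]
  rcases n with _ | _ | n
  · -- n = 0
    simp [PowerSeries.coeff_zero_eq_constantCoeff, PowerSeries.constantCoeff_mk,
      Hm_zero_apply (C := C), apply_ite (PowerSeries.constantCoeff), PowerSeries.constantCoeff_X]
  · -- n = 1
    rw [show ((PowerSeries.X:PowerSeries ℚ)^2) = PowerSeries.X * PowerSeries.X from sq _]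
    rw [mul_assoc, PowerSeries.coeff_succ_X_mul]
    rw [show (PowerSeries.coeff 0) ((PowerSeries.X:PowerSeries ℚ) * PowerSeries.mk fun n => Hm C n i j)
        = 0 from by
      rw [PowerSeries.coeff_zero_eq_constantCoeff, map_mul, PowerSeries.constantCoeff_X, zero_mul]]
    rw [PowerSeries.coeff_mk, Hm_one_apply (C := C) i j]
    have hsum0 : ∀ k ∈ Finset.univ.erase i,
        (PowerSeries.coeff 1) (PowerSeries.C ((C i k : ℚ)) * PowerSeries.X *
          PowerSeries.mk fun n => Hm C n k j) = 0 := by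
      intro k _
      rw [mul_assoc, PowerSeries.coeff_C_mul, PowerSeries.coeff_succ_X_mul,
        PowerSeries.coeff_zero_eq_constantCoeff, PowerSeries.constantCoeff_mk,
        Hm_zero_apply (C := C) k j]
      ring
    rw [Finset.sum_congr rfl hsum0, Finset.sum_const, smul_zero]
    by_cases hij : i = j
    · rw [if_pos hij, if_pos hij, mul_one, PowerSeries.coeff_one_X]
      ring
    · rw [if_neg hij, if_neg hij, mul_zero, map_zero]
      ring
  · -- n + 2
    rw [show ((PowerSeries.X:PowerSeries ℚ)^2) = PowerSeries.X * PowerSeries.X from sq _]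
    rw [mul_assoc, PowerSeries.coeff_succ_X_mul, PowerSeries.coeff_succ_X_mul,
      PowerSeries.coeff_mk, PowerSeries.coeff_mk]
    have hsum : ∀ k ∈ Finset.univ.erase i,
        (PowerSeries.coeff (n+2)) (PowerSeries.C ((C i k : ℚ)) * PowerSeries.X *
          PowerSeries.mk fun n => Hm C n k j)
        = (C i k : ℚ) * Hm C (n+1) k j := by
      intro k _
      rw [mul_assoc, PowerSeries.coeff_C_mul, PowerSeries.coeff_succ_X_mul,
        PowerSeries.coeff_mk]
    rw [Finset.sum_congr rfl hsum]
    have hrec := Hm_succ_apply (C := C) n i j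
    have hAsum : ∑ k, Aabs C i k * Hm C (n+1) k j
        = ∑ k ∈ Finset.univ.erase i, Aabs C i k * Hm C (n+1) k j := by
      rw [← Finset.add_sum_erase Finset.univ _ (Finset.mem_univ i),
        Aabs_apply_diag (C := C) i, zero_mul, zero_add]
    have hAabs : ∀ k ∈ Finset.univ.erase i,
        Aabs C i k * Hm C (n+1) k j = -((C i k : ℚ) * Hm C (n+1) k j) := by
      intro k hk
      rw [Aabs_apply_ne (C := C) (fun he => (Finset.mem_erase.mp hk).1 he.symm)]
      push_cast
      ring
    rw [hAsum, Finset.sum_congr rfl hAabs, Finset.sum_neg_distrib] at hrec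
    have hX : (PowerSeries.coeff (n+2)) ((PowerSeries.X:PowerSeries ℚ) * (if i = j then 1 else 0)) = 0 := by
      by_cases hij : i = j
      · rw [if_pos hij, mul_one, PowerSeries.coeff_X, if_neg (by omega)]
      · rw [if_neg hij, mul_zero, map_zero]
    rw [hX]
    rw [hrec]
    ring

lemma uC_mul_Zps (C : I → I → ℤ) : uC C * Zps C = 1 := by
  have hfield : tv * tv⁻¹ = 1 := mul_inv_cancel₀ tv_ne_zero
  set φ := HahnSeries.ofPowerSeries ℤ ℚ with hφ
  set P : Matrix I I (PowerSeries ℚ) := Matrix.of fun i j =>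
    if i = j then (PowerSeries.X:PowerSeries ℚ)^2 + 1
    else PowerSeries.C ((C i j : ℚ)) * PowerSeries.X with hP
  set Xm : Matrix I I (PowerSeries ℚ) := Matrix.of fun i j =>
    PowerSeries.mk fun n => Hm C n i j with hXm
  have hid := ps_identity C
  have hmap : (P * Xm).map (φ : PowerSeries ℚ →+* K)
      = ((PowerSeries.X : PowerSeries ℚ) • (1 : Matrix I I (PowerSeries ℚ))).map
          (φ : PowerSeries ℚ →+* K) := by rw [hid]
  rw [Matrix.map_mul] at hmap
  have hZ : Xm.map φ = Zps C := by
    refine Matrix.ext fun i j => ?_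
    rfl
  have hPmap : P.map (φ : PowerSeries ℚ →+* K) = tv • uC C := by
    refine Matrix.ext fun i j => ?_
    rw [Matrix.map_apply, Matrix.smul_apply]
    by_cases hij : i = j
    · rw [hP]
      simp only [Matrix.of_apply, if_pos hij]
      rw [uC]
      simp only [Matrix.of_apply, if_pos hij]
      rw [map_add, map_pow, map_one, HahnSeries.ofPowerSeries_X, ← tv_eq, smul_eq_mul,
        mul_add, mul_inv_cancel₀ tv_ne_zero, sq]
    · rw [hP]
      simp only [Matrix.of_apply, if_neg hij]
      rw [uC]
      simp only [Matrix.of_apply, if_neg hij]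
      rw [map_mul, HahnSeries.ofPowerSeries_X, ← tv_eq, HahnSeries.ofPowerSeries_C]
      rw [show HahnSeries.C ((C i j : ℚ)) = ((C i j : ℤ) : K) from map_intCast HahnSeries.C (C i j)]
      rw [smul_eq_mul]
      ring
  have hSmap : ((PowerSeries.X : PowerSeries ℚ) • (1 : Matrix I I (PowerSeries ℚ))).map (φ : PowerSeries ℚ →+* K)
      = tv • (1 : Matrix I I K) := by
    refine Matrix.ext fun i j => ?_
    rw [Matrix.map_apply, Matrix.smul_apply, Matrix.smul_apply, Matrix.one_apply, Matrix.one_apply,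
      smul_eq_mul, smul_eq_mul]
    by_cases hij : i = j
    · rw [if_pos hij, if_pos hij, mul_one, mul_one, HahnSeries.ofPowerSeries_X, ← tv_eq]
    · rw [if_neg hij, if_neg hij, mul_zero, mul_zero, map_zero]
  rw [hZ, hPmap, hSmap] at hmap
  have hsm : (tv • uC C) * Zps C = tv • (uC C * Zps C) := Matrix.smul_mul tv (uC C) (Zps C)
  rw [hsm] at hmap
  calc uC C * Zps C = tv⁻¹ • (tv • (uC C * Zps C)) := (inv_smul_smul₀ tv_ne_zero _).symm
    _ = tv⁻¹ • (tv • (1 : Matrix I I K)) := by rw [hmap]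
    _ = 1 := inv_smul_smul₀ tv_ne_zero _

lemma Kcast_ne_zero {z : ℤ} (hz : z ≠ 0) : ((z : ℤ) : K) ≠ 0 := by
  rw [show ((z : ℤ) : K) = HahnSeries.C ((z : ℚ)) from (map_intCast HahnSeries.C z).symm]
  apply HahnSeries.C_ne_zero
  exact_mod_cast hz

lemma tB_eq (h : Hyp C d) :
    tB C d = Matrix.diagonal (fun i => ((d i : ℤ) : K)) * Zps C := by
  apply Matrix.inv_eq_right_inv
  rw [uB, Matrix.mul_assoc, ← Matrix.mul_assoc (Matrix.diagonal fun i => ((d i : K))⁻¹)]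
  rw [Matrix.diagonal_mul_diagonal]
  have : (fun i => ((d i : K))⁻¹ * ((d i : ℤ) : K)) = fun _ => (1 : K) := by
    funext i
    exact inv_mul_cancel₀ (Kcast_ne_zero (h.hd i).ne')
  rw [this, Matrix.diagonal_one, Matrix.one_mul]
  exact uC_mul_Zps C

lemma Zps_coeff_neg (C : I → I → ℤ) (i j : I) {u : ℤ} (hu : u < 0) :
    (Zps C i j).coeff u = 0 := by
  show ((HahnSeries.ofPowerSeries ℤ ℚ) (PowerSeries.mk fun n => Hm C n i j)).coeff u = 0
  rw [HahnSeries.ofPowerSeries_apply]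
  apply HahnSeries.embDomain_notin_range
  rintro ⟨n, hn⟩
  have hn' : ((n:ℕ):ℤ) = u := hn
  omega

lemma Zps_coeff_nat (C : I → I → ℤ) (i j : I) (n : ℕ) :
    (Zps C i j).coeff (n : ℤ) = Hm C n i j := by
  show ((HahnSeries.ofPowerSeries ℤ ℚ) (PowerSeries.mk fun n => Hm C n i j)).coeff (n:ℤ) = _
  rw [HahnSeries.ofPowerSeries_apply_coeff, PowerSeries.coeff_mk]

lemma btil_eq (h : Hyp C d) (i j : I) (u : ℤ) :
    btil C d i j u = (d i : ℚ) * (if 0 ≤ u then Hm C u.toNat i j else 0) := by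
  unfold btil
  rw [tB_eq h]
  rw [Matrix.diagonal_mul]
  rw [show ((d i : ℤ) : K) = HahnSeries.C ((d i : ℚ)) from (map_intCast HahnSeries.C (d i)).symm]
  have hcoeff : (HahnSeries.C ((d i : ℚ)) * Zps C i j).coeff u
      = (d i : ℚ) * (Zps C i j).coeff u := by
    have := HahnSeries.coeff_single_mul_add (r := ((d i : ℚ))) (x := Zps C i j) (a := u) (b := 0)
    rw [add_zero] at this
    exact this
  rw [hcoeff]
  rcases le_or_gt 0 u with h0 | h0
  · obtain ⟨n, rfl⟩ : ∃ n : ℕ, u = (n : ℤ) := ⟨u.toNat, by omega⟩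
    rw [if_pos h0, Zps_coeff_nat]
    norm_num
  · rw [if_neg (by omega), Zps_coeff_neg C i j h0]

end Series

theorem stmt0
    (C : I → I → ℤ) (d : I → ℤ)
    (hdiag : ∀ i, C i i = 2)
    (hoff : ∀ i j, i ≠ j → C i j ≤ 0)
    (hd : ∀ i, 0 < d i)
    (hsym : ∀ i j, d i * C i j = d j * C j i)
    (hconn : (dynkinGraph C).Connected)
    (hposdef : ∀ v : I → ℚ, v ≠ 0 → 0 < ∑ i, ∑ j, v i * ((d i * C i j : ℤ) : ℚ) * v j)
    (hdet : IsUnit (uB C d).det)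
    (i j : I) :
    (∀ u : ℤ,
        (u ≤ ((dynkinGraph C).dist i j : ℤ) ∨
          u % 2 = ((dynkinGraph C).dist i j : ℤ) % 2) →
        btil C d i j u = 0) ∧
      btil C d i j (((dynkinGraph C).dist i j : ℤ) + 1) = ((max (d i) (d j) : ℤ) : ℚ) := by
  have h : Hyp C d := ⟨hdiag, hoff, hd, hsym, hconn, hposdef⟩
  constructor
  · intro u hu
    rw [btil_eq h]
    rcases le_or_gt 0 u with h0 | h0
    · rw [if_pos h0]
      rcases hu with hle | hpar
      · rw [H_zero_of_le h u.toNat i j (by omega), mul_zero]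
      · rw [H_zero_of_parity h u.toNat i j (by omega), mul_zero]
    · rw [if_neg (by omega), mul_zero]
  · rw [btil_eq h, if_pos (by positivity)]
    have ht : (((dynkinGraph C).dist i j : ℤ) + 1).toNat = (dynkinGraph C).dist i j + 1 := by
      omega
    rw [ht]
    exact H_max h ((dynkinGraph C).dist i j) i j rfl

end Stmt0
end
end

section
/- Let S be a convex subset of the vertex set of the repetition quiver of a finite type Dynkin diagram. Then the set of dominant monomials supported on S is an ideal of the partially ordered set of all dominant monomials under the Nakajima order: if m is a dominant monomial in the variables X_{i,p} with (i,p) ∈ S, and m' is any dominant monomial with m' ≼_N m, then m' is also supported on S. -/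
/-!
STATEMENT 7.  Let `S` be a convex subset of the vertex set of the repetition quiver of a
finite type Dynkin diagram (vertices `(i,p)` with `p ≡ ξ_i (mod 2)`, vertical arrows
`(i,p) → (j,p+1)` for `d(i,j) = 1`; convexity: for any oriented path `x₁ → ⋯ → x_l` of
vertical arrows, `{x₁,…,x_l} ⊆ S` iff `{x₁, x_l} ⊆ S`).  Then the set of dominant
monomials supported on `S` is an ideal of the poset of dominant monomials under the
Nakajima order: if `m` is dominant with support in `S`, and `m'` is any dominant monomial
with `m' ≼_N m`, then `m'` is also supported on `S`.
Monomials are identified with their exponent vectors `(I × ℤ) →₀ ℤ`.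
-/

noncomputable section

open scoped Classical

namespace Stmt7

variable {I : Type*} [Fintype I] [DecidableEq I]

/-- The Dynkin diagram of `C`. -/
def dynkinGraph (C : I → I → ℤ) : SimpleGraph I :=
  SimpleGraph.fromRel fun i j => C i j ≠ 0

/-- The vertical-arrow relation of the repetition quiver. -/
def ArrowRel (C : I → I → ℤ) (x y : I × ℤ) : Prop :=
  (dynkinGraph C).Adj x.1 y.1 ∧ y.2 = x.2 + 1

/-- Convexity: for every oriented path of vertical arrows, all its vertices lie in `S`
iff its two endpoints do. -/
def IsConvex (C : I → I → ℤ) (S : Set (I × ℤ)) : Prop :=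
  ∀ (x : I × ℤ) (l : List (I × ℤ)) (y : I × ℤ),
    List.Chain (ArrowRel C) x (l ++ [y]) →
      ((x ∈ S ∧ y ∈ S) ↔ ∀ z ∈ x :: (l ++ [y]), z ∈ S)

/-- The exponent vector of `B_{i,p}`. -/
def Bvec (C : I → I → ℤ) (x : I × ℤ) : (I × ℤ) →₀ ℤ :=
  Finsupp.single (x.1, x.2 - 1) 1 + Finsupp.single (x.1, x.2 + 1) 1 +
    ∑ j ∈ Finset.univ.filter (fun j => (dynkinGraph C).Adj j x.1),
      Finsupp.single (j, x.2) (C j x.1)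

/-- Dominant monomials: all exponents nonnegative. -/
def Dominant (m : (I × ℤ) →₀ ℤ) : Prop := ∀ x, 0 ≤ m x

/-- The Nakajima order: `m' ≼_N m` iff `m = m' · Π B_{i,p}^{f(i,p)}`. -/
def NakLE (C : I → I → ℤ) (ξ : I → ℤ) (m' m : (I × ℤ) →₀ ℤ) : Prop :=
  ∃ f : (I × ℤ) →₀ ℕ,
    (∀ x ∈ f.support, (x.2 + 1) % 2 = ξ x.1 % 2) ∧
      m = m' + f.sum fun x n => (n : ℤ) • Bvec C x

lemma Bvec_apply (C : I → I → ℤ) (x : I × ℤ) (i : I) (q : ℤ) :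
    Bvec C x (i, q) =
      (if x = (i, q + 1) then 1 else 0) + (if x = (i, q - 1) then 1 else 0) +
        (if (dynkinGraph C).Adj i x.1 ∧ x.2 = q then C i x.1 else 0) := by
  classical
  unfold Bvec
  rw [Finsupp.add_apply, Finsupp.add_apply, Finsupp.single_apply, Finsupp.single_apply,
    Finsupp.finset_sum_apply]
  congr 1
  · congr 1
    · refine if_congr ?_ rfl rfl
      constructor
      · intro h
        obtain ⟨h1, h2⟩ : x.1 = i ∧ x.2 - 1 = q := Prod.mk.injEq .. ▸ h
        exact Prod.ext h1 (by omega)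
      · intro h; subst h; simp
    · refine if_congr ?_ rfl rfl
      constructor
      · intro h
        obtain ⟨h1, h2⟩ : x.1 = i ∧ x.2 + 1 = q := Prod.mk.injEq .. ▸ h
        exact Prod.ext h1 (by omega)
      · intro h; subst h; simp
  · simp only [Finsupp.single_apply]
    by_cases hq : x.2 = q
    · subst hq
      rw [Finset.sum_congr rfl (fun j _ => if_congr (by simp) rfl rfl :
        ∀ j ∈ Finset.univ.filter (fun j => (dynkinGraph C).Adj j x.1),
          (if (j, x.2) = (i, x.2) then C j x.1 else 0) = (if j = i then C j x.1 else 0))]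
      rw [Finset.sum_ite_eq' _ i (fun j => C j x.1)]
      refine if_congr ?_ rfl rfl
      simp
    · rw [Finset.sum_congr rfl (fun j _ =>
          if_neg (fun hc => hq ((Prod.mk.injEq .. ▸ hc : j = i ∧ x.2 = q)).2) :
        ∀ j ∈ Finset.univ.filter (fun j => (dynkinGraph C).Adj j x.1),
          (if (j, x.2) = (i, q) then C j x.1 else 0) = 0)]
      rw [Finset.sum_const_zero, if_neg (fun hc => hq hc.2)]

lemma gsum_apply (C : I → I → ℤ) (f : (I × ℤ) →₀ ℕ) (i : I) (q : ℤ) :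
    (f.sum fun x n => (n : ℤ) • Bvec C x) (i, q) =
      (f (i, q + 1) : ℤ) + (f (i, q - 1) : ℤ) +
        ∑ k ∈ Finset.univ.filter (fun k => (dynkinGraph C).Adj i k), C i k * (f (k, q) : ℤ) := by
  classical
  rw [Finsupp.sum_apply]
  rw [Finsupp.sum]
  simp only [Finsupp.smul_apply, smul_eq_mul, Bvec_apply, mul_add]
  rw [Finset.sum_add_distrib, Finset.sum_add_distrib]
  congr 1
  · congr 1
    · rw [Finset.sum_congr rfl (fun x _ => by rw [mul_ite, mul_one, mul_zero]),
        Finset.sum_ite_eq' f.support (i, q+1) (fun x => (f x : ℤ))]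
      by_cases h : (i, q+1) ∈ f.support
      · rw [if_pos h]
      · rw [if_neg h, Finsupp.notMem_support_iff.mp h, Nat.cast_zero]
    · rw [Finset.sum_congr rfl (fun x _ => by rw [mul_ite, mul_one, mul_zero]),
        Finset.sum_ite_eq' f.support (i, q-1) (fun x => (f x : ℤ))]
      by_cases h : (i, q-1) ∈ f.support
      · rw [if_pos h]
      · rw [if_neg h, Finsupp.notMem_support_iff.mp h, Nat.cast_zero]
  · have hre : ∀ x ∈ f.support, (f x : ℤ) * (if (dynkinGraph C).Adj i x.1 ∧ x.2 = q then C i x.1 else 0)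
        = (if (dynkinGraph C).Adj i x.1 ∧ x.2 = q then (f x : ℤ) * C i x.1 else 0) := by
      intro x _; rw [mul_ite, mul_zero]
    rw [Finset.sum_congr rfl hre]
    set h : I × ℤ → ℤ := fun x =>
      if (dynkinGraph C).Adj i x.1 ∧ x.2 = q then (f x : ℤ) * C i x.1 else 0 with hh
    set Tk := Finset.univ.filter (fun k => (dynkinGraph C).Adj i k) with hTk
    set T2 := Tk.image (fun k => (k, q)) with hT2
    have hinj : Set.InjOn (fun k => ((k, q) : I × ℤ)) Tk := by
      intro a _ b _ hab; exact (Prod.mk.injEq .. ▸ hab).1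
    have e1 : ∑ x ∈ f.support, h x = ∑ x ∈ f.support ∪ T2, h x := by
      apply Finset.sum_subset Finset.subset_union_left
      intro x _ hx
      show (if (dynkinGraph C).Adj i x.1 ∧ x.2 = q then (f x : ℤ) * C i x.1 else 0) = 0
      simp only [Finsupp.notMem_support_iff.mp hx, Nat.cast_zero, zero_mul, ite_self]
    have e2 : ∑ x ∈ T2, h x = ∑ x ∈ f.support ∪ T2, h x := by
      apply Finset.sum_subset Finset.subset_union_right
      intro x _ hx
      show (if (dynkinGraph C).Adj i x.1 ∧ x.2 = q then (f x : ℤ) * C i x.1 else 0) = 0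
      by_cases hc : (dynkinGraph C).Adj i x.1 ∧ x.2 = q
      · exfalso
        apply hx
        rw [hT2]
        refine Finset.mem_image.mpr ⟨x.1, ?_, ?_⟩
        · simp [hTk, hc.1]
        · exact Prod.ext rfl hc.2.symm
      · rw [if_neg hc]
    have e3 : ∑ x ∈ T2, h x = ∑ k ∈ Tk, C i k * (f (k, q) : ℤ) := by
      rw [hT2, Finset.sum_image (fun a ha b hb hab => hinj ha hb hab)]
      apply Finset.sum_congr rfl
      intro k hk
      show (if (dynkinGraph C).Adj i k ∧ q = q then (f (k, q) : ℤ) * C i k else 0)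
        = C i k * (f (k, q) : ℤ)
      simp only [Finset.mem_filter, Finset.mem_univ, true_and, hTk] at hk
      rw [if_pos ⟨hk, rfl⟩, mul_comm]
    rw [e1, ← e2, e3]

lemma chain_snoc' {α : Type*} {R : α → α → Prop} :
    ∀ (l : List α) (a : α) (c z : α), List.Chain R a l →
      (a :: l).getLast? = some z → R z c → List.Chain R a (l ++ [c])
  | [], a, c, z, _, hz, hR => by
      have : a = z := by simpa using hz
      subst this
      exact List.chain_cons.mpr ⟨hR, List.Chain.nil⟩
  | b :: l, a, c, z, h, hz, hR => by
      rw [List.getLast?_cons_cons] at hz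
      obtain ⟨h1, h2⟩ := List.chain_cons.mp h
      exact List.chain_cons.mpr ⟨h1, chain_snoc' l b c z h2 hz hR⟩

lemma getLast?_cons_append_cons {α : Type*} :
    ∀ (l₁ : List α) (a b : α) (l₂ : List α),
      (a :: (l₁ ++ b :: l₂)).getLast? = (b :: l₂).getLast?
  | [], a, b, l₂ => List.getLast?_cons_cons
  | c :: l, a, b, l₂ => by
      rw [List.cons_append, List.getLast?_cons_cons]
      exact getLast?_cons_append_cons l c b l₂

lemma convAll (C : I → I → ℤ) (S : Set (I × ℤ)) (hconv : IsConvex C S)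
    (a : I × ℤ) (L : List (I × ℤ)) (hL : L ≠ [])
    (hch : List.Chain (ArrowRel C) a L) (ha : a ∈ S) (z : I × ℤ)
    (hz : (a :: L).getLast? = some z) (hzS : z ∈ S) : ∀ w ∈ a :: L, w ∈ S := by
  rcases List.eq_nil_or_concat L with rfl | ⟨L', y, rfl⟩
  · exact absurd rfl hL
  rw [List.concat_eq_append] at hch hz ⊢
  have hzy : z = y := by
    rw [show a :: (L' ++ [y]) = (a :: L') ++ [y] from rfl, List.getLast?_concat] at hz
    exact (Option.some.injEq .. ▸ hz).symm
  subst hzy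
  exact (hconv a L' z hch).mp ⟨ha, hzS⟩

lemma up (C : I → I → ℤ) (S : Set (I × ℤ)) (f : (I × ℤ) →₀ ℕ) (N : ℤ)
    (hN : ∀ x ∈ f.support, x.2 ≤ N)
    (hkey : ∀ i q, 0 < (f (i, q + 1) : ℤ) + (f (i, q - 1) : ℤ) →
      (i, q) ∈ S ∨ ∃ k, (dynkinGraph C).Adj i k ∧ (k, q) ∈ f.support) :
    ∀ n : ℕ, ∀ x : I × ℤ, x ∈ f.support → (N - x.2).toNat ≤ n →
      ∃ (L : List (I × ℤ)) (t : I × ℤ), List.Chain (ArrowRel C) (x.1, x.2 + 1) L ∧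
        ((x.1, x.2 + 1) :: L).getLast? = some t ∧ t ∈ S := by
  intro n
  induction n with
  | zero =>
    intro x hx hmeas
    have hpos : 0 < (f (x.1, x.2 + 1 + 1) : ℤ) + (f (x.1, x.2 + 1 - 1) : ℤ) := by
      rw [show ((x.1, x.2 + 1 - 1) : I × ℤ) = x from Prod.ext rfl (by ring)]
      have h2 : 0 < (f x : ℤ) := by
        exact_mod_cast Nat.pos_of_ne_zero (Finsupp.mem_support_iff.mp hx)
      have h3 : (0 : ℤ) ≤ (f (x.1, x.2 + 1 + 1) : ℤ) := Nat.cast_nonneg _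
      linarith
    rcases hkey x.1 (x.2 + 1) hpos with hS | ⟨k, hadj, hk⟩
    · exact ⟨[], (x.1, x.2 + 1), List.Chain.nil, by simp, hS⟩
    · exfalso
      have := hN _ hk
      simp only at this
      omega
  | succ n IH =>
    intro x hx hmeas
    have hpos : 0 < (f (x.1, x.2 + 1 + 1) : ℤ) + (f (x.1, x.2 + 1 - 1) : ℤ) := by
      rw [show ((x.1, x.2 + 1 - 1) : I × ℤ) = x from Prod.ext rfl (by ring)]
      have h2 : 0 < (f x : ℤ) := by
        exact_mod_cast Nat.pos_of_ne_zero (Finsupp.mem_support_iff.mp hx)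
      have h3 : (0 : ℤ) ≤ (f (x.1, x.2 + 1 + 1) : ℤ) := Nat.cast_nonneg _
      linarith
    rcases hkey x.1 (x.2 + 1) hpos with hS | ⟨k, hadj, hk⟩
    · exact ⟨[], (x.1, x.2 + 1), List.Chain.nil, by simp, hS⟩
    · have hb : x.2 + 1 ≤ N := hN _ hk
      obtain ⟨L, t, hch, hlast, htS⟩ := IH (k, x.2 + 1) hk (by simp only; omega)
      refine ⟨(k, x.2 + 1 + 1) :: L, t, ?_, ?_, htS⟩
      · exact List.chain_cons.mpr ⟨⟨hadj, rfl⟩, hch⟩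
      · rw [List.getLast?_cons_cons]
        exact hlast

lemma down (C : I → I → ℤ) (S : Set (I × ℤ)) (f : (I × ℤ) →₀ ℕ) (M : ℤ)
    (hM : ∀ x ∈ f.support, M ≤ x.2)
    (hkey : ∀ i q, 0 < (f (i, q + 1) : ℤ) + (f (i, q - 1) : ℤ) →
      (i, q) ∈ S ∨ ∃ k, (dynkinGraph C).Adj i k ∧ (k, q) ∈ f.support) :
    ∀ n : ℕ, ∀ x : I × ℤ, x ∈ f.support → (x.2 - M).toNat ≤ n →
      ∃ (b : I × ℤ) (L : List (I × ℤ)), b ∈ S ∧ List.Chain (ArrowRel C) b L ∧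
        (b :: L).getLast? = some (x.1, x.2 - 1) := by
  intro n
  induction n with
  | zero =>
    intro x hx hmeas
    have hpos : 0 < (f (x.1, x.2 - 1 + 1) : ℤ) + (f (x.1, x.2 - 1 - 1) : ℤ) := by
      rw [show ((x.1, x.2 - 1 + 1) : I × ℤ) = x from Prod.ext rfl (by ring)]
      have h2 : 0 < (f x : ℤ) := by
        exact_mod_cast Nat.pos_of_ne_zero (Finsupp.mem_support_iff.mp hx)
      have h3 : (0 : ℤ) ≤ (f (x.1, x.2 - 1 - 1) : ℤ) := Nat.cast_nonneg _
      linarith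
    rcases hkey x.1 (x.2 - 1) hpos with hS | ⟨k, hadj, hk⟩
    · exact ⟨(x.1, x.2 - 1), [], hS, List.Chain.nil, by simp⟩
    · exfalso
      have := hM _ hk
      simp only at this
      omega
  | succ n IH =>
    intro x hx hmeas
    have hpos : 0 < (f (x.1, x.2 - 1 + 1) : ℤ) + (f (x.1, x.2 - 1 - 1) : ℤ) := by
      rw [show ((x.1, x.2 - 1 + 1) : I × ℤ) = x from Prod.ext rfl (by ring)]
      have h2 : 0 < (f x : ℤ) := by
        exact_mod_cast Nat.pos_of_ne_zero (Finsupp.mem_support_iff.mp hx)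
      have h3 : (0 : ℤ) ≤ (f (x.1, x.2 - 1 - 1) : ℤ) := Nat.cast_nonneg _
      linarith
    rcases hkey x.1 (x.2 - 1) hpos with hS | ⟨k, hadj, hk⟩
    · exact ⟨(x.1, x.2 - 1), [], hS, List.Chain.nil, by simp⟩
    · have hb : M ≤ x.2 - 1 := hM _ hk
      obtain ⟨b, L, hbS, hch, hlast⟩ := IH (k, x.2 - 1) hk (by simp only; omega)
      refine ⟨b, L ++ [(x.1, x.2 - 1)], hbS, ?_, ?_⟩
      · exact chain_snoc' L b (x.1, x.2 - 1) (k, x.2 - 1 - 1) hch hlast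
          ⟨hadj.symm, by simp⟩
      · rw [show b :: (L ++ [(x.1, x.2 - 1)]) = (b :: L) ++ [(x.1, x.2 - 1)] from rfl,
          List.getLast?_concat]

theorem stmt7
    (C : I → I → ℤ) (d : I → ℤ) (ξ : I → ℤ)
    (hdiag : ∀ i, C i i = 2)
    (hoff : ∀ i j, i ≠ j → C i j ≤ 0)
    (hd : ∀ i, 0 < d i)
    (hsym : ∀ i j, d i * C i j = d j * C j i)
    (hconn : (dynkinGraph C).Connected)
    (hxi : ∀ i j, (dynkinGraph C).Adj i j → (ξ i + ξ j) % 2 = 1)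
    (S : Set (I × ℤ))
    (hSlat : ∀ x ∈ S, x.2 % 2 = ξ x.1 % 2)
    (hconv : IsConvex C S)
    (m m' : (I × ℤ) →₀ ℤ)
    (hm : Dominant m) (hmS : ∀ x ∈ m.support, x ∈ S)
    (hm' : Dominant m') (hle : NakLE C ξ m' m) :
    ∀ x ∈ m'.support, x ∈ S := by
  classical
  obtain ⟨f, hfpar, hsum⟩ := hle
  have hval : ∀ i q, m (i, q) = m' (i, q) + ((f (i, q + 1) : ℤ) + (f (i, q - 1) : ℤ) +
      ∑ k ∈ Finset.univ.filter (fun k => (dynkinGraph C).Adj i k), C i k * (f (k, q) : ℤ)) := by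
    intro i q
    rw [hsum, Finsupp.add_apply, gsum_apply]
  have hmzero : ∀ v : I × ℤ, v ∉ S → m v = 0 := by
    intro v hv
    by_contra h
    exact hv (hmS v (Finsupp.mem_support_iff.mpr h))
  have hkey : ∀ i q, 0 < (f (i, q + 1) : ℤ) + (f (i, q - 1) : ℤ) →
      (i, q) ∈ S ∨ ∃ k, (dynkinGraph C).Adj i k ∧ (k, q) ∈ f.support := by
    intro i q hpos
    by_cases hS : (i, q) ∈ S
    · exact Or.inl hS
    right
    by_contra hk
    push_neg at hk
    have hz : ∑ k ∈ Finset.univ.filter (fun k => (dynkinGraph C).Adj i k),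
        C i k * (f (k, q) : ℤ) = 0 := by
      apply Finset.sum_eq_zero
      intro k hkk
      have hmem : (k, q) ∉ f.support := hk k (by simpa using hkk)
      rw [Finsupp.notMem_support_iff.mp hmem]
      simp
    have h0 := hmzero (i, q) hS
    have hvq := hval i q
    have hm'q := hm' (i, q)
    rw [h0, hz] at hvq
    linarith
  obtain ⟨N, hN0⟩ := Finset.exists_le (f.support.image Prod.snd)
  have hN : ∀ x ∈ f.support, x.2 ≤ N := fun x hx => hN0 _ (Finset.mem_image_of_mem _ hx)
  obtain ⟨M0, hM0⟩ := Finset.exists_le (f.support.image (fun x => -x.2))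
  have hM : ∀ x ∈ f.support, -M0 ≤ x.2 := by
    intro x hx
    have := hM0 _ (Finset.mem_image_of_mem (fun x => -x.2) hx)
    omega
  have hup := up C S f N hN hkey
  have hdown := down C S f (-M0) hM hkey
  have hfpos : ∀ x ∈ f.support, 0 < (f x : ℤ) := by
    intro x hx
    exact_mod_cast Nat.pos_of_ne_zero (Finsupp.mem_support_iff.mp hx)
  have upS : ∀ x ∈ f.support, (x.1, x.2 + 1) ∈ S := by
    intro x hx
    by_contra hxs
    have hpos : 0 < (f (x.1, x.2 + 1 + 1) : ℤ) + (f (x.1, x.2 + 1 - 1) : ℤ) := by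
      rw [show ((x.1, x.2 + 1 - 1) : I × ℤ) = x from Prod.ext rfl (by ring)]
      have h3 : (0 : ℤ) ≤ (f (x.1, x.2 + 1 + 1) : ℤ) := Nat.cast_nonneg _
      have := hfpos x hx
      linarith
    rcases hkey x.1 (x.2 + 1) hpos with h | ⟨k, hadj, hk⟩
    · exact hxs h
    obtain ⟨Lup, t, hchU, hlastU, htS⟩ := hup ((N - (x.2 + 1)).toNat) (k, x.2 + 1) hk le_rfl
    obtain ⟨b, Ldn, hbS, hchD, hlastD⟩ := hdown ((x.2 - (-M0)).toNat) x hx le_rfl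
    have hchTail : List.Chain (ArrowRel C) (k, x.2)
        ((x.1, x.2 + 1) :: (k, x.2 + 1 + 1) :: Lup) :=
      List.chain_cons.mpr ⟨⟨hadj.symm, by simp⟩,
        List.chain_cons.mpr ⟨⟨hadj, rfl⟩, hchU⟩⟩
    have hchain : List.Chain (ArrowRel C) b
        (Ldn ++ (k, x.2) :: ((x.1, x.2 + 1) :: (k, x.2 + 1 + 1) :: Lup)) := by
      refine List.isChain_cons_split.mpr ⟨?_, hchTail⟩
      exact chain_snoc' Ldn b (k, x.2) (x.1, x.2 - 1) hchD hlastD ⟨hadj, by simp⟩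
    have hlast : (b :: (Ldn ++ (k, x.2) ::
        ((x.1, x.2 + 1) :: (k, x.2 + 1 + 1) :: Lup))).getLast? = some t := by
      rw [getLast?_cons_append_cons, List.getLast?_cons_cons, List.getLast?_cons_cons]
      exact hlastU
    have hall := convAll C S hconv b _ (by simp) hchain hbS t hlast htS
    exact hxs (hall (x.1, x.2 + 1) (by simp))
  have downS : ∀ x ∈ f.support, (x.1, x.2 - 1) ∈ S := by
    intro x hx
    by_contra hxs
    have hpos : 0 < (f (x.1, x.2 - 1 + 1) : ℤ) + (f (x.1, x.2 - 1 - 1) : ℤ) := by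
      rw [show ((x.1, x.2 - 1 + 1) : I × ℤ) = x from Prod.ext rfl (by ring)]
      have h3 : (0 : ℤ) ≤ (f (x.1, x.2 - 1 - 1) : ℤ) := Nat.cast_nonneg _
      have := hfpos x hx
      linarith
    rcases hkey x.1 (x.2 - 1) hpos with h | ⟨k, hadj, hk⟩
    · exact hxs h
    obtain ⟨b, Ldn, hbS, hchD, hlastD⟩ := hdown ((x.2 - 1 - (-M0)).toNat) (k, x.2 - 1) hk le_rfl
    obtain ⟨Lup, t, hchU, hlastU, htS⟩ := hup ((N - x.2).toNat) x hx le_rfl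
    have hchTail : List.Chain (ArrowRel C) (x.1, x.2 - 1)
        ((k, x.2) :: (x.1, x.2 + 1) :: Lup) :=
      List.chain_cons.mpr ⟨⟨hadj, by simp⟩,
        List.chain_cons.mpr ⟨⟨hadj.symm, by simp⟩, hchU⟩⟩
    have hchain : List.Chain (ArrowRel C) b
        (Ldn ++ (x.1, x.2 - 1) :: ((k, x.2) :: (x.1, x.2 + 1) :: Lup)) := by
      refine List.isChain_cons_split.mpr ⟨?_, hchTail⟩
      exact chain_snoc' Ldn b (x.1, x.2 - 1) (k, x.2 - 1 - 1) hchD hlastD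
        ⟨hadj.symm, by simp⟩
    have hlast : (b :: (Ldn ++ (x.1, x.2 - 1) ::
        ((k, x.2) :: (x.1, x.2 + 1) :: Lup))).getLast? = some t := by
      rw [getLast?_cons_append_cons, List.getLast?_cons_cons, List.getLast?_cons_cons]
      exact hlastU
    have hall := convAll C S hconv b _ (by simp) hchain hbS t hlast htS
    exact hxs (hall (x.1, x.2 - 1) (by simp))
  have midS : ∀ x ∈ f.support, ∀ j, (dynkinGraph C).Adj j x.1 → (j, x.2) ∈ S := by
    intro x hx j hadj
    have h1 := downS x hx
    have h2 := upS x hx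
    have hch : List.Chain (ArrowRel C) (x.1, x.2 - 1) ([(j, x.2)] ++ [(x.1, x.2 + 1)]) :=
      List.chain_cons.mpr ⟨⟨hadj.symm, by simp⟩,
        List.chain_cons.mpr ⟨⟨hadj, by simp⟩, List.Chain.nil⟩⟩
    exact ((hconv _ _ _ hch).mp ⟨h1, h2⟩) (j, x.2) (by simp)
  rintro ⟨i, q⟩ hy
  by_contra hyS
  have h0 : m (i, q) = 0 := hmzero _ hyS
  have h1 : (0 : ℤ) < m' (i, q) :=
    lt_of_le_of_ne (hm' _) (Ne.symm (Finsupp.mem_support_iff.mp hy))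
  have hv := hval i q
  by_cases hp : (i, q + 1) ∈ f.support
  · have hds := downS (i, q + 1) hp
    exact hyS (by rwa [show (((i, q + 1) : I × ℤ).1, ((i, q + 1) : I × ℤ).2 - 1) = (i, q)
      from Prod.ext rfl (by ring)] at hds)
  by_cases hq2 : (i, q - 1) ∈ f.support
  · have hus := upS (i, q - 1) hq2
    exact hyS (by rwa [show (((i, q - 1) : I × ℤ).1, ((i, q - 1) : I × ℤ).2 + 1) = (i, q)
      from Prod.ext rfl (by ring)] at hus)
  have hz1 : (f (i, q + 1) : ℤ) = 0 := by
    rw [Finsupp.notMem_support_iff.mp hp]; simp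
  have hz2 : (f (i, q - 1) : ℤ) = 0 := by
    rw [Finsupp.notMem_support_iff.mp hq2]; simp
  have hsneg : ∑ k ∈ Finset.univ.filter (fun k => (dynkinGraph C).Adj i k),
      C i k * (f (k, q) : ℤ) < 0 := by
    rw [hz1, hz2] at hv
    linarith
  have hex : ∃ k ∈ Finset.univ.filter (fun k => (dynkinGraph C).Adj i k),
      C i k * (f (k, q) : ℤ) < 0 := by
    by_contra hc
    push_neg at hc
    exact absurd (Finset.sum_nonneg hc) (not_le.mpr hsneg)
  obtain ⟨k, hkf, hklt⟩ := hex
  have hkadj : (dynkinGraph C).Adj i k := by simpa using hkf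
  have hksupp : (k, q) ∈ f.support := by
    rw [Finsupp.mem_support_iff]
    intro h
    rw [h] at hklt
    simp at hklt
  exact hyS (midS (k, q) hksupp i hkadj)

end Stmt7
end
end

section
/- Let Δ be a connected Dynkin diagram and let ξ and ξ' be two height functions on Δ. Then ξ_i - ξ'_i has the same parity for all i, and if ξ_i ≡ ξ'_i (mod 2) for all i, there exists a finite sequence of source-reflections and inverse sink-reflections transforming (Δ, ξ) into (Δ, ξ'). -/
/-!
STATEMENT 9.  On a connected Dynkin diagram `Δ` of finite type (here: a finite connected
acyclic graph `G`), any two height functions `ξ, ξ'` (maps with `|ξ_i - ξ_j| = 1` for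
adjacent `i, j`) satisfy:
(a) `ξ_i - ξ'_i` has the same parity for all `i`;
(b) if `ξ_i ≡ ξ'_i (mod 2)` for all `i`, then there is a finite sequence of
reflections at sources (`ξ_i ↦ ξ_i - 2`) and inverse reflections at sinks
(`ξ_i ↦ ξ_i + 2`) transforming `(Δ, ξ)` into `(Δ, ξ')`.
-/

namespace Stmt9

variable {I : Type*} [Fintype I] [DecidableEq I]

/-- `ξ` is a height function on the graph `G`. -/
def IsHeight (G : SimpleGraph I) (ξ : I → ℤ) : Prop :=
  ∀ i j, G.Adj i j → ξ i = ξ j + 1 ∨ ξ j = ξ i + 1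

/-- `i` is a source of `(G, ξ)`. -/
def IsSource (G : SimpleGraph I) (ξ : I → ℤ) (i : I) : Prop :=
  ∀ j, G.Adj i j → ξ j < ξ i

/-- `i` is a sink of `(G, ξ)`. -/
def IsSink (G : SimpleGraph I) (ξ : I → ℤ) (i : I) : Prop :=
  ∀ j, G.Adj i j → ξ i < ξ j

/-- One elementary move: a reflection at a source, or an inverse reflection at a sink. -/
def RStep (G : SimpleGraph I) (ξ η : I → ℤ) : Prop :=
  ∃ i, (IsSource G ξ i ∧ η = Function.update ξ i (ξ i - 2)) ∨
       (IsSink G ξ i ∧ η = Function.update ξ i (ξ i + 2))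

private lemma parity_walk (G : SimpleGraph I) (ξ ξ' : I → ℤ)
    (hξ : IsHeight G ξ) (hξ' : IsHeight G ξ') {i j : I} (p : G.Walk i j) :
    (ξ i - ξ' i) % 2 = (ξ j - ξ' j) % 2 := by
  induction p with
  | nil => rfl
  | cons h p ih =>
    have h1 := hξ _ _ h
    have h2 := hξ' _ _ h
    omega

private lemma reach (G : SimpleGraph I) (ξ' : I → ℤ) (hξ' : IsHeight G ξ') :
    ∀ n (ξ : I → ℤ), IsHeight G ξ → (∀ i, (ξ i - ξ' i) % 2 = 0) →
      (∑ i, (ξ i - ξ' i).natAbs) ≤ n → Relation.ReflTransGen (RStep G) ξ ξ' := by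
  intro n
  induction n with
  | zero =>
    intro ξ hh hp hs
    have hfe : ξ = ξ' := by
      funext i
      have := (Finset.sum_eq_zero_iff.mp (Nat.le_zero.mp hs)) i (Finset.mem_univ i)
      omega
    rw [hfe]
  | succ n ih =>
    intro ξ hh hp hs
    by_cases hne : ξ = ξ'
    · rw [hne]
    · obtain ⟨i0, hi0⟩ : ∃ i, ξ i ≠ ξ' i := by
        by_contra h; push_neg at h; exact hne (funext h)
      rcases lt_or_gt_of_ne hi0 with hlt | hgt
      · -- sink case: ξ i0 < ξ' i0
        obtain ⟨i, hiS, hmin⟩ :=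
          Finset.exists_min_image (Finset.univ.filter fun j => ξ j < ξ' j) ξ
            ⟨i0, by simp [hlt]⟩
        have hiS' : ξ i < ξ' i := by simpa using hiS
        have hsnk : IsSink G ξ i := by
          intro j hadj
          rcases hh i j hadj with h1 | h1
          · exfalso
            have hjS : ξ j < ξ' j := by rcases hξ' i j hadj with h2 | h2 <;> omega
            have := hmin j (by simp [hjS])
            omega
          · omega
        have hge2 : 2 ≤ ξ' i - ξ i := by have := hp i; omega
        set η := Function.update ξ i (ξ i + 2) with hηdef
        have e1 : η i = ξ i + 2 := by simp [hηdef]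
        have e2 : ∀ j, j ≠ i → η j = ξ j := fun j hj => Function.update_of_ne hj _ _
        have hstep : RStep G ξ η := ⟨i, Or.inr ⟨hsnk, rfl⟩⟩
        have hhη : IsHeight G η := by
          intro a b hab
          by_cases ha : a = i
          · subst ha
            have h3 := hsnk b hab
            rw [e1, e2 b (Ne.symm hab.ne)]
            have := hh a b hab
            omega
          · by_cases hb : b = i
            · subst hb
              have h3 := hsnk a hab.symm
              rw [e2 a ha, e1]
              have := hh a b hab
              omega
            · rw [e2 a ha, e2 b hb]; exact hh a b hab
        have hpη : ∀ j, (η j - ξ' j) % 2 = 0 := by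
          intro j
          by_cases hj : j = i
          · subst hj; rw [e1]; have := hp j; omega
          · rw [e2 j hj]; exact hp j
        have hfun : (fun j => (η j - ξ' j).natAbs) =
            Function.update (fun j => (ξ j - ξ' j).natAbs) i ((ξ i + 2 - ξ' i).natAbs) := by
          funext j
          by_cases hj : j = i
          · subst hj; rw [e1, Function.update_self]
          · rw [e2 j hj, Function.update_of_ne hj]
        have hs1 : (∑ j, (η j - ξ' j).natAbs)
            = (ξ i + 2 - ξ' i).natAbs + ∑ j ∈ Finset.univ.erase i, (ξ j - ξ' j).natAbs := by
          calc (∑ j, (η j - ξ' j).natAbs)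
              = ∑ j, Function.update (fun j => (ξ j - ξ' j).natAbs) i
                  ((ξ i + 2 - ξ' i).natAbs) j := by rw [hfun]
            _ = _ := by rw [Finset.sum_update_of_mem (Finset.mem_univ i), Finset.sdiff_singleton_eq_erase]
        have hs2 : (∑ j, (ξ j - ξ' j).natAbs)
            = (ξ i - ξ' i).natAbs + ∑ j ∈ Finset.univ.erase i, (ξ j - ξ' j).natAbs :=
          (Finset.add_sum_erase _ _ (Finset.mem_univ i)).symm
        exact Relation.ReflTransGen.head hstep (ih η hhη hpη (by omega))
      · -- source case: ξ' i0 < ξ i0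
        obtain ⟨i, hiS, hmax⟩ :=
          Finset.exists_max_image (Finset.univ.filter fun j => ξ' j < ξ j) ξ
            ⟨i0, by simp [hgt]⟩
        have hiS' : ξ' i < ξ i := by simpa using hiS
        have hsrc : IsSource G ξ i := by
          intro j hadj
          rcases hh i j hadj with h1 | h1
          · omega
          · exfalso
            have hjS : ξ' j < ξ j := by rcases hξ' i j hadj with h2 | h2 <;> omega
            have := hmax j (by simp [hjS])
            omega
        have hge2 : 2 ≤ ξ i - ξ' i := by have := hp i; omega
        set η := Function.update ξ i (ξ i - 2) with hηdef
        have e1 : η i = ξ i - 2 := by simp [hηdef]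
        have e2 : ∀ j, j ≠ i → η j = ξ j := fun j hj => Function.update_of_ne hj _ _
        have hstep : RStep G ξ η := ⟨i, Or.inl ⟨hsrc, rfl⟩⟩
        have hhη : IsHeight G η := by
          intro a b hab
          by_cases ha : a = i
          · subst ha
            have h3 := hsrc b hab
            rw [e1, e2 b (Ne.symm hab.ne)]
            have := hh a b hab
            omega
          · by_cases hb : b = i
            · subst hb
              have h3 := hsrc a hab.symm
              rw [e2 a ha, e1]
              have := hh a b hab
              omega
            · rw [e2 a ha, e2 b hb]; exact hh a b hab
        have hpη : ∀ j, (η j - ξ' j) % 2 = 0 := by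
          intro j
          by_cases hj : j = i
          · subst hj; rw [e1]; have := hp j; omega
          · rw [e2 j hj]; exact hp j
        have hfun : (fun j => (η j - ξ' j).natAbs) =
            Function.update (fun j => (ξ j - ξ' j).natAbs) i ((ξ i - 2 - ξ' i).natAbs) := by
          funext j
          by_cases hj : j = i
          · subst hj; rw [e1, Function.update_self]
          · rw [e2 j hj, Function.update_of_ne hj]
        have hs1 : (∑ j, (η j - ξ' j).natAbs)
            = (ξ i - 2 - ξ' i).natAbs + ∑ j ∈ Finset.univ.erase i, (ξ j - ξ' j).natAbs := by
          calc (∑ j, (η j - ξ' j).natAbs)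
              = ∑ j, Function.update (fun j => (ξ j - ξ' j).natAbs) i
                  ((ξ i - 2 - ξ' i).natAbs) j := by rw [hfun]
            _ = _ := by rw [Finset.sum_update_of_mem (Finset.mem_univ i), Finset.sdiff_singleton_eq_erase]
        have hs2 : (∑ j, (ξ j - ξ' j).natAbs)
            = (ξ i - ξ' i).natAbs + ∑ j ∈ Finset.univ.erase i, (ξ j - ξ' j).natAbs :=
          (Finset.add_sum_erase _ _ (Finset.mem_univ i)).symm
        exact Relation.ReflTransGen.head hstep (ih η hhη hpη (by omega))

theorem stmt9
    (G : SimpleGraph I) (hconn : G.Connected) (hacyc : G.IsAcyclic)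
    (ξ ξ' : I → ℤ) (hξ : IsHeight G ξ) (hξ' : IsHeight G ξ') :
    (∀ i j : I, (ξ i - ξ' i) % 2 = (ξ j - ξ' j) % 2) ∧
      ((∀ i : I, (ξ i - ξ' i) % 2 = 0) → Relation.ReflTransGen (RStep G) ξ ξ') := by
  constructor
  · intro i j
    exact parity_walk G ξ ξ' hξ hξ' (hconn.preconnected i j).some
  · intro hp
    exact reach G ξ' hξ' _ ξ hξ hp le_rfl

end Stmt9
end

section
/- Let (L, B̃) be a compatible pair: L a skew-symmetric K×K integer matrix, B̃ a K×K_ex integer exchange matrix with skew-symmetrizable principal part, satisfying (L B̃)_{j,i} = -δ_{i,j} d_i for all i ∈ K_ex, j ∈ K and positive integers d_i. Then for each k ∈ K_ex, the mutated pair μ_k(L, B̃) = (E^T L E, E B̃ F) (with E, F the standard mutation matrices) is again compatible with the same diagonal matrix: (μ_k(L) μ_k(B̃))_{j,i} = -δ_{i,j} d_i. -/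
/-!
STATEMENT 11.  Let `(L, B̃)` be a compatible pair: `L` a skew-symmetric `K × K` integer
matrix, `B̃` a `K × K_ex` integer exchange matrix (finitely many nonzero entries in each
exchangeable column, skew-symmetrizable principal part), satisfying
`(L B̃)_{j,i} = -δ_{i,j} d_i` for all `i ∈ K_ex`, `j ∈ K`, with positive integers `d_i`.
Then for each `k ∈ K_ex` the mutated pair `μ_k(L, B̃) = (Eᵀ L E, E B̃ F)`, with `E, F` the
standard mutation matrices, is again compatible with the same diagonal matrix:
`(μ_k(L) μ_k(B̃))_{j,i} = -δ_{i,j} d_i`.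
Since `K` may be infinite, matrix products are expressed with `finsum` (`∑ᶠ`), which is
well defined because of the column-finiteness hypotheses.
-/

noncomputable section

open scoped Classical

namespace Stmt11

variable {K : Type*} [DecidableEq K]

/-- The mutation matrix `E` at `k`. -/
def eMat (B : K → K → ℤ) (k : K) : K → K → ℤ := fun i j =>
  if j = k then (if i = k then -1 else max 0 (-B i k))
  else if i = j then 1 else 0

/-- The mutation matrix `F` at `k`. -/
def fMat (B : K → K → ℤ) (k : K) : K → K → ℤ := fun i j =>
  if i = k then (if j = k then -1 else max 0 (B k j))
  else if i = j then 1 else 0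

/-- `μ_k(L) = Eᵀ L E`. -/
def mutL (L B : K → K → ℤ) (k : K) : K → K → ℤ := fun x y =>
  ∑ᶠ a : K, ∑ᶠ b : K, eMat B k a x * L a b * eMat B k b y

/-- `μ_k(B̃) = E B̃ F`. -/
def mutB (B : K → K → ℤ) (k : K) : K → K → ℤ := fun x y =>
  ∑ᶠ a : K, ∑ᶠ b : K, eMat B k x a * B a b * fMat B k b y

/-- Auxiliary: a function vanishing outside a finite set has finite support. -/
lemma supp_fin {f : K → ℤ} {s : Set K} (hs : s.Finite) (h : ∀ x, x ∉ s → f x = 0) :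
    (Function.support f).Finite :=
  hs.subset fun x hx => by
    by_contra hxs
    exact hx (h x hxs)

/-- Auxiliary: finsum of a function supported on at most two (distinct) points. -/
lemma finsum_pair {f : K → ℤ} {a b : K} (hab : a ≠ b)
    (h : ∀ x, x ≠ a → x ≠ b → f x = 0) : ∑ᶠ x, f x = f a + f b := by
  have hsub : Function.support f ⊆ (({a, b} : Finset K) : Set K) := by
    intro x hx
    simp only [Finset.coe_insert, Finset.coe_singleton, Set.mem_insert_iff,
      Set.mem_singleton_iff]
    by_contra hc
    push_neg at hc
    exact hx (h x hc.1 hc.2)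
  rw [finsum_eq_finset_sum_of_support_subset f hsub, Finset.sum_pair hab]

theorem stmt11
    (ex : K → Prop)                    -- the exchangeable indices
    (B L : K → K → ℤ) (D : K → ℤ) (t : K → ℤ)
    (hBfin : ∀ j, ex j → (Function.support fun i => B i j).Finite)
    (hskewL : ∀ x y, L x y = - L y x)
    (ht : ∀ i, ex i → 0 < t i)
    (hsymB : ∀ i j, ex i → ex j → t i * B i j = -(t j * B j i))
    (hD : ∀ i, ex i → 0 < D i)
    (hcompat : ∀ (j i : K), ex i →
      (∑ᶠ x : K, L j x * B x i) = -(if j = i then D i else 0))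
    (k : K) (hk : ex k) :
    ∀ (j i : K), ex i →
      (∑ᶠ x : K, mutL L B k j x * mutB B k x i) = -(if j = i then D i else 0) := by
  intro j i hi
  have htk := ht k hk
  -- B k k = 0
  have hBkk : B k k = 0 := by
    have h1 := hsymB k k hk hk
    have h2 : t k * B k k = 0 := by linarith
    rcases mul_eq_zero.mp h2 with h | h
    · exact absurd h (by positivity)
    · exact h
  -- the compatibility relation `D_m B_{m k} = - D_k B_{k m}`
  have hsubcol : ∀ (m : K) (hm : ex m) (g : K → ℤ),
      Function.support (fun y => g y * B y m) ⊆ ((hBfin m hm).toFinset : Set K) := by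
    intro m hm g y hy
    simp only [Function.mem_support] at hy
    have hB : B y m ≠ 0 := fun h => hy (by rw [h, mul_zero])
    simp [Set.Finite.mem_toFinset, Function.mem_support, hB]
  have hDB : ∀ m, ex m → D m * B m k = -(D k * B k m) := by
    intro m hm
    set sm : Finset K := (hBfin m hm).toFinset with hsm
    set tk : Finset K := (hBfin k hk).toFinset with htkdef
    have e1 : ∑ x ∈ sm, B x m * (∑ y ∈ tk, L x y * B y k) = -(B k m * D k) := by
      have hpt : ∀ x, B x m * (∑ y ∈ tk, L x y * B y k)
          = B x m * (-(if x = k then D k else 0)) := by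
        intro x
        congr 1
        rw [← hcompat x k hk]
        exact (finsum_eq_finset_sum_of_support_subset _ (hsubcol k hk (L x))).symm
      rw [Finset.sum_congr rfl fun x _ => hpt x]
      rw [← finsum_eq_finset_sum_of_support_subset _
        (by
          intro x hx
          simp only [Function.mem_support] at hx
          have : B x m ≠ 0 := fun h => hx (by rw [h, zero_mul])
          simp [hsm, Set.Finite.mem_toFinset, Function.mem_support, this]),
        finsum_eq_single _ k (by intro x hx; simp [hx])]
      simp
    have e2 : ∑ x ∈ sm, B x m * (∑ y ∈ tk, L x y * B y k) = D m * B m k := by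
      simp_rw [Finset.mul_sum]
      rw [Finset.sum_comm]
      have inner : ∀ y, (∑ x ∈ sm, B x m * (L x y * B y k))
          = (if y = m then D m else 0) * B y k := by
        intro y
        have hpt : ∀ x, B x m * (L x y * B y k) = (L y x * B x m) * (-(B y k)) := by
          intro x
          rw [hskewL x y]
          ring
        rw [Finset.sum_congr rfl fun x _ => hpt x, ← Finset.sum_mul]
        have hs : ∑ x ∈ sm, L y x * B x m = -(if y = m then D m else 0) := by
          rw [← hcompat y m hm]
          exact (finsum_eq_finset_sum_of_support_subset _ (hsubcol m hm (L y))).symm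
        rw [hs]
        ring
      rw [Finset.sum_congr rfl fun y _ => inner y]
      rw [← finsum_eq_finset_sum_of_support_subset _
        (by
          intro y hy
          simp only [Function.mem_support] at hy
          have : B y k ≠ 0 := fun h => hy (by rw [h, mul_zero])
          simp [htkdef, Set.Finite.mem_toFinset, Function.mem_support, this]),
        finsum_eq_single _ m (by intro y hy; simp [hy])]
      simp
    linear_combination e1 - e2
  -- the sign identity
  have hsign : max 0 (B k i) * D k = max 0 (-B i k) * D i := by
    have hDBi := hDB i hi
    have hsB := hsymB i k hi hk
    have hti := ht i hi
    rcases le_or_gt 0 (B k i) with h | h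
    · have h2 : B i k ≤ 0 := by nlinarith
      rw [max_eq_right h, max_eq_right (by linarith : (0:ℤ) ≤ -B i k)]
      linear_combination hDBi
    · have h2 : 0 ≤ B i k := by nlinarith
      rw [max_eq_left (le_of_lt h), max_eq_left (by linarith : -B i k ≤ 0)]
      simp
  -- basic finite sets and vanishing facts
  set sk : Finset K := insert k (hBfin k hk).toFinset with hskdef
  set si : Finset K := insert i (hBfin i hi).toFinset with hsidef
  have hk_sk : k ∈ sk := Finset.mem_insert_self _ _
  have hi_si : i ∈ si := Finset.mem_insert_self _ _
  have hBk0 : ∀ x, x ∉ sk → B x k = 0 := by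
    intro x hx
    by_contra h
    exact hx (Finset.mem_insert_of_mem ((hBfin k hk).mem_toFinset.mpr h))
  have hBi0 : ∀ x, x ∉ si → B x i = 0 := by
    intro x hx
    by_contra h
    exact hx (Finset.mem_insert_of_mem ((hBfin i hi).mem_toFinset.mpr h))
  -- entries of `E`
  have heM : ∀ a x, eMat B k a x
      = if x = k then (if a = k then -1 else max 0 (-B a k)) else if a = x then 1 else 0 :=
    fun a x => rfl
  have heMkk : eMat B k k k = -1 := by simp [eMat]
  have hε0 : ∀ x, x ∉ sk → eMat B k x k = 0 := by
    intro x hx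
    have hxk : x ≠ k := fun h => hx (h ▸ hk_sk)
    simp [eMat, hxk, hBk0 x hx]
  -- entries of `F` in column `i`
  set φ : ℤ := if i = k then -1 else max 0 (B k i) with hφdef
  have hf : ∀ b, fMat B k b i = if b = k then φ else if b = i then 1 else 0 := by
    intro b
    by_cases hb : b = k <;> simp [fMat, hb, hφdef]
  -- the auxiliary column `C = B̃ F` (column i)
  set C : K → ℤ := fun a => B a k * φ + (if i = k then 0 else B a i) with hCdef
  have hC0 : ∀ x, x ∉ sk → x ∉ si → C x = 0 := by
    intro x h1 h2
    simp only [hCdef]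
    rw [hBk0 x h1]
    split_ifs
    · ring
    · rw [hBi0 x h2]; ring
  -- closed form for the mutated B-column
  have hmB : ∀ x, mutB B k x i = eMat B k x k * C k + (if x = k then 0 else C x) := by
    intro x
    have inner : ∀ a, (∑ᶠ b, eMat B k x a * B a b * fMat B k b i) = eMat B k x a * C a := by
      intro a
      by_cases hik : i = k
      · rw [finsum_eq_single _ k (by
          intro b hb
          rw [hf b]
          simp [hb, hik])]
        rw [hf k]
        simp [hCdef, hik]
        ring
      · rw [finsum_pair (a := k) (b := i) (fun h => hik h.symm) (by
          intro b hb1 hb2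
          rw [hf b]
          simp [hb1, hb2])]
        rw [hf k, hf i]
        simp [hCdef, hik, Ne.symm hik]
        ring
    rw [show mutB B k x i = ∑ᶠ a, eMat B k x a * C a from finsum_congr inner]
    by_cases hx : x = k
    · rw [finsum_eq_single _ k (by
        intro a ha
        rw [heM x a]
        simp [ha, hx, Ne.symm ha])]
      simp [hx]
    · rw [finsum_pair (a := k) (b := x) (fun h => hx h.symm) (by
        intro a ha1 ha2
        rw [heM x a]
        simp [ha1, Ne.symm ha2])]
      rw [heM x k, heM x x]
      simp [hx]
  have hmB0 : ∀ x, x ∉ sk → x ∉ si → mutB B k x i = 0 := by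
    intro x h1 h2
    have hxk : x ≠ k := fun h => h1 (h ▸ hk_sk)
    rw [hmB x, hε0 x h1, hC0 x h1 h2, if_neg hxk]
    ring
  -- the matrix Λ and the entries P of `L E`
  set Λ : K → ℤ := fun a => ∑ᶠ b, L a b * eMat B k b k with hΛdef
  set P : K → K → ℤ := fun a x => if x = k then Λ a else L a x with hPdef
  have hΛsum : ∀ a, (∑ᶠ x, L a x * eMat B k x k) = Λ a := fun a => rfl
  have hΛfin : ∀ a, (Function.support fun b => L a b * eMat B k b k).Finite := by
    intro a
    exact supp_fin (sk : Set K).toFinite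
      (fun b hb => by rw [hε0 b (by simpa using hb)]; ring)
  have hmL : ∀ x, mutL L B k j x = ∑ᶠ a, eMat B k a j * P a x := by
    intro x
    apply finsum_congr
    intro a
    have hfin : (Function.support fun b => L a b * eMat B k b x).Finite := by
      apply supp_fin ((insert x sk : Finset K) : Set K).toFinite
      intro b hb
      simp only [Finset.coe_insert, Set.mem_insert_iff, Finset.mem_coe] at hb
      push_neg at hb
      by_cases hxk : x = k
      · rw [hxk] at hb ⊢
        rw [hε0 b hb.2]; ring
      · rw [heM b x]; simp [hxk, hb.1]
    calc (∑ᶠ b, eMat B k a j * L a b * eMat B k b x)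
        = ∑ᶠ b, eMat B k a j * (L a b * eMat B k b x) :=
          finsum_congr fun b => by ring
      _ = eMat B k a j * ∑ᶠ b, L a b * eMat B k b x := (mul_finsum _ _).symm
      _ = eMat B k a j * P a x := by
          congr 1
          by_cases hxk : x = k
          · rw [hxk, hΛsum a]
            simp [hPdef]
          · rw [finsum_eq_single _ x (by
              intro b hb
              rw [heM b x]
              simp [hxk, hb])]
            rw [heM x x]
            simp [hPdef, hxk]
  have hE0j : ∀ a, a ∉ insert j sk → eMat B k a j = 0 := by
    intro a ha
    have haj : a ≠ j := fun h => ha (h ▸ Finset.mem_insert_self _ _)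
    have hask : a ∉ sk := fun h => ha (Finset.mem_insert_of_mem h)
    by_cases hjk : j = k
    · rw [hjk]; exact hε0 a hask
    · rw [heM a j]; simp [hjk, haj]
  -- key identity 1 : `(L E) E = L` in column k, i.e. `∑ᶠ x, P a x * E x k = L a k`
  have key1 : ∀ a, (∑ᶠ x, P a x * eMat B k x k) = L a k := by
    intro a
    have hfg : ∀ x, P a x * eMat B k x k
        = L a x * eMat B k x k + (if x = k then L a k - Λ a else 0) := by
      intro x
      by_cases hx : x = k
      · rw [hx]
        simp [hPdef, heMkk]
        ring
      · simp [hPdef, hx]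
    rw [finsum_congr hfg,
      finsum_add_distrib (hΛfin a) (supp_fin (Set.finite_singleton k)
        (by intro x hx; rw [if_neg (by simpa using hx)])),
      hΛsum a,
      finsum_eq_single _ k (by intro x hx; rw [if_neg hx])]
    simp
  -- key identity 2
  have hLBfin : ∀ (m : K), ex m → ∀ (a : K), (Function.support fun x => L a x * B x m).Finite := by
    intro m hm a
    exact (hBfin m hm).subset (by
      intro x hx
      simp only [Function.mem_support] at hx ⊢
      exact fun h => hx (by rw [h, mul_zero]))
  have key2 : ∀ a m, ex m → (∑ᶠ x, (if x = k then 0 else L a x * B x m))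
      = -(if a = m then D m else 0) - L a k * B k m := by
    intro a m hm
    have hfg : ∀ x, (if x = k then (0:ℤ) else L a x * B x m)
        = L a x * B x m - (if x = k then L a k * B k m else 0) := by
      intro x
      by_cases hx : x = k
      · rw [hx]; simp
      · simp [hx]
    rw [finsum_congr hfg,
      finsum_sub_distrib (hLBfin m hm a) (supp_fin (Set.finite_singleton k)
        (by intro x hx; rw [if_neg (by simpa using hx)])),
      hcompat a m hm,
      finsum_eq_single _ k (by intro x hx; rw [if_neg hx])]
    simp
  -- the value `Q a = ∑ᶠ x, P a x * mutB x i`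
  set Q : K → ℤ := fun a => -((if a = k then φ * D k else 0)
      + (if i = k then 0 else if a = i then D i else 0)) with hQdef
  have hQ0 : ∀ a, a ≠ k → a ≠ i → Q a = 0 := by
    intro a h1 h2
    simp [hQdef, h1, h2]
  have keyC : ∀ a, (∑ᶠ x, P a x * mutB B k x i) = Q a := by
    intro a
    have step : ∀ x, P a x * mutB B k x i
        = P a x * eMat B k x k * C k + (if x = k then 0 else L a x * C x) := by
      intro x
      rw [hmB x]
      by_cases hx : x = k
      · rw [hx]
        simp
        ring
      · have hPx : P a x = L a x := by simp [hPdef, hx]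
        rw [hPx, if_neg hx, if_neg hx]
        ring
    have hfin1 : (Function.support fun x => P a x * eMat B k x k * C k).Finite := by
      apply supp_fin (sk : Set K).toFinite
      intro x hx
      rw [hε0 x (by simpa using hx)]
      ring
    have hfin2 : (Function.support fun x => if x = k then 0 else L a x * C x).Finite := by
      apply supp_fin ((sk ∪ si : Finset K) : Set K).toFinite
      intro x hx
      simp only [Finset.coe_union, Set.mem_union, Finset.mem_coe] at hx
      push_neg at hx
      have hxk : x ≠ k := fun h => hx.1 (h ▸ hk_sk)
      rw [if_neg hxk, hC0 x hx.1 hx.2]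
      ring
    rw [finsum_congr step, finsum_add_distrib hfin1 hfin2]
    have t1 : (∑ᶠ x, P a x * eMat B k x k * C k) = L a k * C k := by
      rw [← finsum_mul _ (C k), key1 a]
    by_cases hik : i = k
    · have hφk : φ = -1 := by rw [hφdef, if_pos hik]
      have hCx : ∀ x, C x = -B x k := by
        intro x
        simp [hCdef, hik, hφk]
      have t2 : (∑ᶠ x, (if x = k then 0 else L a x * C x))
          = (if a = k then D k else 0) := by
        have hneg : ∀ x, (if x = k then (0:ℤ) else L a x * C x)
            = -(if x = k then 0 else L a x * B x k) := by
          intro x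
          by_cases hx : x = k
          · simp [hx]
          · rw [if_neg hx, if_neg hx, hCx x]
            ring
        rw [finsum_congr hneg, finsum_neg_distrib, key2 a k hk, hBkk]
        ring
      rw [t1, t2, hCx k, hBkk]
      simp only [hQdef, if_pos hik, hφk]
      split_ifs <;> ring
    · have hCx : ∀ x, C x = B x k * φ + B x i := by
        intro x
        simp [hCdef, hik]
      have hfk0 : (Function.support fun x => if x = k then (0:ℤ) else L a x * B x k).Finite := by
        apply supp_fin (sk : Set K).toFinite
        intro x hx
        have hx' : x ∉ sk := by simpa using hx
        have hxk : x ≠ k := fun h => hx' (h ▸ hk_sk)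
        rw [if_neg hxk, hBk0 x hx']
        ring
      have hfk : (Function.support fun x => (if x = k then (0:ℤ) else L a x * B x k) * φ).Finite := by
        apply supp_fin (sk : Set K).toFinite
        intro x hx
        have hx' : x ∉ sk := by simpa using hx
        have hxk : x ≠ k := fun h => hx' (h ▸ hk_sk)
        rw [if_neg hxk, hBk0 x hx']
        ring
      have hfi : (Function.support fun x => if x = k then (0:ℤ) else L a x * B x i).Finite := by
        apply supp_fin (si : Set K).toFinite
        intro x hx
        by_cases hxk : x = k
        · rw [if_pos hxk]
        · rw [if_neg hxk, hBi0 x (by simpa using hx)]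
          ring
      have t2 : (∑ᶠ x, (if x = k then 0 else L a x * C x))
          = (-(if a = k then D k else 0)) * φ
            + (-(if a = i then D i else 0) - L a k * B k i) := by
        have hsplit : ∀ x, (if x = k then (0:ℤ) else L a x * C x)
            = (if x = k then 0 else L a x * B x k) * φ
              + (if x = k then 0 else L a x * B x i) := by
          intro x
          by_cases hx : x = k
          · simp [hx]
          · rw [if_neg hx, if_neg hx, if_neg hx, hCx x]
            ring
        rw [finsum_congr hsplit, finsum_add_distrib hfk hfi,
          ← finsum_mul _ φ, key2 a k hk, key2 a i hi, hBkk]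
        ring
      rw [t1, t2, hCx k, hBkk]
      simp only [hQdef, if_neg hik]
      split_ifs <;> ring
  -- final assembly
  set W : Finset K := insert j (sk ∪ si) with hWdef
  have hkW : k ∈ W := Finset.mem_insert_of_mem (Finset.mem_union_left _ hk_sk)
  have hiW : i ∈ W := Finset.mem_insert_of_mem (Finset.mem_union_right _ hi_si)
  have hmB0' : ∀ x, x ∉ W → mutB B k x i = 0 := by
    intro x hx
    have h1 : x ∉ sk := fun h => hx (Finset.mem_insert_of_mem (Finset.mem_union_left _ h))
    have h2 : x ∉ si := fun h => hx (Finset.mem_insert_of_mem (Finset.mem_union_right _ h))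
    exact hmB0 x h1 h2
  have hEW : ∀ a, a ∉ W → eMat B k a j = 0 := by
    intro a ha
    apply hE0j
    intro hmem
    rcases Finset.mem_insert.mp hmem with h | h
    · exact ha (h ▸ Finset.mem_insert_self _ _)
    · exact ha (Finset.mem_insert_of_mem (Finset.mem_union_left _ h))
  calc (∑ᶠ x, mutL L B k j x * mutB B k x i)
      = ∑ x ∈ W, (∑ a ∈ W, eMat B k a j * P a x) * mutB B k x i := by
        rw [finsum_eq_finset_sum_of_support_subset _ (s := W) (by
          intro x hx
          simp only [Function.mem_support] at hx
          by_contra hxW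
          exact hx (by rw [hmB0' x (by simpa using hxW), mul_zero]))]
        refine Finset.sum_congr rfl fun x _ => ?_
        rw [hmL x]
        congr 1
        exact finsum_eq_finset_sum_of_support_subset _ (by
          intro a ha
          simp only [Function.mem_support] at ha
          by_contra haW
          exact ha (by rw [hEW a (by simpa using haW), zero_mul]))
    _ = ∑ a ∈ W, eMat B k a j * ∑ x ∈ W, P a x * mutB B k x i := by
        simp_rw [Finset.sum_mul, mul_assoc]
        rw [Finset.sum_comm]
        simp_rw [← Finset.mul_sum]
    _ = ∑ a ∈ W, eMat B k a j * Q a := by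
        refine Finset.sum_congr rfl fun a _ => ?_
        congr 1
        rw [← keyC a]
        exact (finsum_eq_finset_sum_of_support_subset _ (by
          intro x hx
          simp only [Function.mem_support] at hx
          by_contra hxW
          exact hx (by rw [hmB0' x (by simpa using hxW), mul_zero]))).symm
    _ = ∑ᶠ a, eMat B k a j * Q a := by
        refine (finsum_eq_finset_sum_of_support_subset _ ?_).symm
        intro a ha
        simp only [Function.mem_support] at ha
        by_contra haW
        exact ha (by rw [hEW a (by simpa using haW), zero_mul])
    _ = -(if j = i then D i else 0) := by
      have hEkj : eMat B k k j = if j = k then -1 else 0 := by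
        by_cases hj : j = k
        · simp [eMat, hj]
        · simp [eMat, hj, Ne.symm hj]
      by_cases hik : i = k
      · have hφk : φ = -1 := by rw [hφdef, if_pos hik]
        rw [finsum_eq_single _ k (by
          intro a ha
          rw [hQ0 a ha (fun h => ha (h.trans hik)), mul_zero])]
        have hQk : Q k = D k := by
          simp [hQdef, hik, hφk]
        rw [hQk, hEkj]
        by_cases hj : j = k
        · rw [if_pos hj, if_pos (hj.trans hik.symm), hik]
          ring
        · rw [if_neg hj, if_neg (fun h : j = i => hj (h.trans hik))]
          ring
      · have hφi : φ = max 0 (B k i) := by rw [hφdef, if_neg hik]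
        have hEij : eMat B k i j = if j = k then max 0 (-B i k) else if i = j then 1 else 0 := by
          by_cases hj : j = k <;> simp [eMat, hj, hik]
        rw [finsum_pair (a := k) (b := i) (fun h => hik h.symm) (by
          intro a h1 h2
          rw [hQ0 a h1 h2, mul_zero])]
        have hQk : Q k = -(φ * D k) := by
          simp [hQdef, hik, Ne.symm hik]
        have hQi : Q i = -(D i) := by
          simp [hQdef, hik]
        rw [hQk, hQi, hEkj, hEij]
        by_cases hj : j = k
        · rw [if_pos hj, if_pos hj, if_neg (fun h : j = i => hik (h.symm.trans hj)), hφi]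
          linear_combination hsign
        · rw [if_neg hj, if_neg hj]
          rcases eq_or_ne i j with h | h
          · rw [if_pos h, if_pos h.symm]
            ring
          · rw [if_neg h, if_neg (Ne.symm h)]
            ring

end Stmt11
end
end
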